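/- arXiv:2202.00817 — 5 statements merged into one kernel-verified Lean document; each statement's English description precedes it below -/
import Mathlib

section
/- Let p be an admissible noise distribution on ℝ^m with density p(w) = e^{α − ψ(w)}. Suppose f(θ, w) = g_out(g_in(θ) + w) has benign separability: g_in: ℝ^d → ℝ^m is everywhere differentiable and g_out: ℝ^m → ℝ is Lebesgue measurable with polynomial growth. Then F(θ) := E_{w∼p}[f(θ, w)] is well-defined for every θ, F is differentiable, and ∇F(θ) = E_{w∼p}[ (D g_in(θ))ᵀ ∇ψ(w) · f(θ, w) ]. -/
open MeasureTheory

/-- A function into a normed space has polynomial growth if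
`‖f z‖ ≤ a (1 + ‖z‖^b)` for all `z`, for some constants `a, b > 0`. -/
def PolyGrowth {E F : Type*} [NormedAddCommGroup E] [NormedAddCommGroup F] (f : E → F) : Prop :=
  ∃ a b : ℝ, 0 < a ∧ 0 < b ∧ ∀ z, ‖f z‖ ≤ a * (1 + ‖z‖ ^ b)

lemma poly_le_exp (s c : ℝ) (hc : 0 < c) :
    ∃ K : ℝ, 0 < K ∧ ∀ t : ℝ, 0 ≤ t → (1 + t) ^ s ≤ K * Real.exp (c * t) := by
  obtain ⟨n, hn⟩ : ∃ n : ℕ, max s c ≤ n ∧ 1 ≤ (n : ℝ) := by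
    obtain ⟨n, hn⟩ := exists_nat_ge (max (max s c) 1)
    exact ⟨n, le_trans (le_max_left _ _) hn, le_trans (le_max_right _ _) hn⟩
  have hns : s ≤ n := le_trans (le_max_left _ _) hn.1
  have hnc : c ≤ n := le_trans (le_max_right _ _) hn.1
  have hn0 : (0:ℝ) < n := lt_of_lt_of_le one_pos hn.2
  refine ⟨((n:ℝ)/c)^n, pow_pos (div_pos hn0 hc) n, fun t ht => ?_⟩
  have h1t : (1:ℝ) ≤ 1 + t := by linarith
  calc (1+t) ^ s ≤ (1+t) ^ (n:ℝ) := Real.rpow_le_rpow_of_exponent_le h1t hns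
    _ = (1+t) ^ (n:ℕ) := Real.rpow_natCast _ n
    _ ≤ (((n:ℝ)/c) * (1 + (c/n)*t)) ^ (n:ℕ) := by
        apply pow_le_pow_left₀ (by linarith)
        have : ((n:ℝ)/c) * (1 + (c/n)*t) = (n:ℝ)/c + t := by
          field_simp
        rw [this]
        have : (1:ℝ) ≤ (n:ℝ)/c := (one_le_div hc).mpr hnc
        linarith
    _ = ((n:ℝ)/c)^n * (1 + (c/n)*t) ^ (n:ℕ) := mul_pow _ _ n
    _ ≤ ((n:ℝ)/c)^n * Real.exp (c * t) := by
        apply mul_le_mul_of_nonneg_left _ (pow_nonneg (div_nonneg hn0.le hc.le) n)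
        have h2 : (1 + (c/n)*t) ≤ Real.exp ((c/n)*t) := by
          have := Real.add_one_le_exp ((c/n)*t); linarith
        calc (1 + (c/n)*t) ^ (n:ℕ) ≤ (Real.exp ((c/n)*t)) ^ (n:ℕ) := by
              apply pow_le_pow_left₀ _ h2
              positivity
          _ = Real.exp ((n:ℕ) * ((c/n)*t)) := by rw [← Real.exp_nat_mul]
          _ = Real.exp (c * t) := by
              congr 1
              field_simp

lemma integrable_poly_exp (m : ℕ) (v₀ : EuclideanSpace ℝ (Fin m)) (s c : ℝ) (hc : 0 < c) :
    Integrable (fun u : EuclideanSpace ℝ (Fin m) =>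
      (1 + ‖u - v₀‖) ^ s * Real.exp (-c * ‖u - v₀‖)) volume := by
  have base : Integrable (fun u : EuclideanSpace ℝ (Fin m) =>
      (1 + ‖u‖) ^ s * Real.exp (-c * ‖u‖)) volume := by
    obtain ⟨K, hK, hKb⟩ := poly_le_exp (s + (m+1)) c hc
    have hint : Integrable (fun u : EuclideanSpace ℝ (Fin m) => K * (1 + ‖u‖) ^ (-((m:ℝ)+1))) volume := by
      apply Integrable.const_mul
      apply integrable_one_add_norm (E := EuclideanSpace ℝ (Fin m))
      simp
    apply hint.mono'
    · apply Continuous.aestronglyMeasurable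
      apply Continuous.mul
      · exact (continuous_const.add continuous_norm).rpow_const (fun x => Or.inl (by show (1:ℝ) + ‖x‖ ≠ 0; positivity))
      · exact (continuous_const.mul continuous_norm).rexp
    · filter_upwards with u
      have h1 : (0:ℝ) < 1 + ‖u‖ := by positivity
      rw [norm_mul, Real.norm_of_nonneg (Real.rpow_nonneg h1.le s), Real.norm_of_nonneg (Real.exp_pos _).le]
      have key : (1 + ‖u‖) ^ (s + ((m:ℝ)+1)) * Real.exp (-c * ‖u‖) ≤ K := by
        have h2 := mul_le_mul_of_nonneg_right (hKb ‖u‖ (norm_nonneg u)) (Real.exp_pos (-c * ‖u‖)).le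
        rw [mul_assoc, ← Real.exp_add] at h2
        simpa using h2
      have expand : (1 + ‖u‖) ^ s = (1 + ‖u‖) ^ (s + ((m:ℝ)+1)) * (1 + ‖u‖) ^ (-((m:ℝ)+1)) := by
        rw [← Real.rpow_add h1]; ring_nf
      rw [expand]
      calc (1 + ‖u‖) ^ (s + ((m:ℝ)+1)) * (1 + ‖u‖) ^ (-((m:ℝ)+1)) * Real.exp (-c * ‖u‖)
          = ((1 + ‖u‖) ^ (s + ((m:ℝ)+1)) * Real.exp (-c * ‖u‖)) * (1 + ‖u‖) ^ (-((m:ℝ)+1)) := by ring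
        _ ≤ K * (1 + ‖u‖) ^ (-((m:ℝ)+1)) := by
            apply mul_le_mul_of_nonneg_right key (Real.rpow_nonneg h1.le _)
  simpa using base.comp_sub_right v₀

lemma polyGrowth_norm {E F : Type*} [NormedAddCommGroup E] [NormedAddCommGroup F]
    {f : E → F} (h : PolyGrowth f) :
    ∃ C B : ℝ, 0 < C ∧ 0 < B ∧ ∀ z, ‖f z‖ ≤ C * (1 + ‖z‖) ^ B := by
  obtain ⟨a, b, ha, hb, hf⟩ := h
  refine ⟨2 * a, b, by linarith, hb, fun z => ?_⟩
  have h1 : (0:ℝ) ≤ ‖z‖ := norm_nonneg z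
  have h2 : (1:ℝ) ≤ (1 + ‖z‖) ^ b := Real.one_le_rpow (by linarith) hb.le
  have h3 : ‖z‖ ^ b ≤ (1 + ‖z‖) ^ b := Real.rpow_le_rpow h1 (by linarith) hb.le
  calc ‖f z‖ ≤ a * (1 + ‖z‖ ^ b) := hf z
    _ ≤ a * ((1 + ‖z‖) ^ b + (1 + ‖z‖) ^ b) := by
        apply mul_le_mul_of_nonneg_left (by linarith) ha.le
    _ = 2 * a * (1 + ‖z‖) ^ b := by ring

/-- If the fderiv of `g` has a normalized polynomial bound then so does `g` (with +1 degree),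
up to a constant offset absorbed. -/

lemma growth_of_deriv_growth {E F : Type*} [NormedAddCommGroup E] [NormedSpace ℝ E]
    [NormedAddCommGroup F] [NormedSpace ℝ F]
    {g : E → F} (hg : Differentiable ℝ g) {C B : ℝ} (hC : 0 < C) (hB : 0 < B)
    (hd : ∀ z, ‖fderiv ℝ g z‖ ≤ C * (1 + ‖z‖) ^ B) :
    ∃ C' : ℝ, 0 < C' ∧ ∀ z, ‖g z‖ ≤ C' * (1 + ‖z‖) ^ (B + 1) := by
  refine ⟨‖g 0‖ + C + 1, by positivity, fun z => ?_⟩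
  have hz : (0:ℝ) ≤ ‖z‖ := norm_nonneg z
  have h1 : (1:ℝ) ≤ (1 + ‖z‖) ^ (B+1) := Real.one_le_rpow (by linarith) (by linarith)
  have key : ‖g z - g 0‖ ≤ (C * (1 + ‖z‖) ^ B) * ‖z - 0‖ := by
    apply Convex.norm_image_sub_le_of_norm_fderiv_le (fun x _ => hg x)
      (fun x hx => ?_) (convex_closedBall (0:E) ‖z‖) (Metric.mem_closedBall_self hz)
      (by simp [hz])
    calc ‖fderiv ℝ g x‖ ≤ C * (1 + ‖x‖) ^ B := hd x
      _ ≤ C * (1 + ‖z‖) ^ B := by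
          apply mul_le_mul_of_nonneg_left _ hC.le
          apply Real.rpow_le_rpow (by positivity) _ hB.le
          have hxz := mem_closedBall_iff_norm.mp hx
          simp only [sub_zero] at hxz
          linarith
  have h2 : ‖g z‖ ≤ ‖g 0‖ + (C * (1 + ‖z‖) ^ B) * ‖z‖ := by
    have := norm_sub_norm_le (g z) (g 0)
    simp only [sub_zero] at key
    calc ‖g z‖ ≤ ‖g 0‖ + ‖g z - g 0‖ := by
          have := norm_le_insert' (g z) (g 0)
          linarith [norm_sub_rev (g z) (g 0) ▸ this]
      _ ≤ ‖g 0‖ + (C * (1 + ‖z‖) ^ B) * ‖z‖ := by linarith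
  have h3 : (1 + ‖z‖) ^ B * ‖z‖ ≤ (1 + ‖z‖) ^ (B + 1) := by
    have : (1 + ‖z‖) ^ (B + 1) = (1 + ‖z‖) ^ B * (1 + ‖z‖) := by
      rw [Real.rpow_add (by linarith), Real.rpow_one]
    rw [this]
    apply mul_le_mul_of_nonneg_left (by linarith) (Real.rpow_nonneg (by linarith) B)
  have hg0 : ‖g 0‖ ≤ ‖g 0‖ * (1 + ‖z‖) ^ (B+1) := le_mul_of_one_le_right (norm_nonneg _) h1
  calc ‖g z‖ ≤ ‖g 0‖ + (C * (1 + ‖z‖) ^ B) * ‖z‖ := h2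
    _ ≤ ‖g 0‖ * (1 + ‖z‖) ^ (B+1) + C * (1 + ‖z‖) ^ (B+1) := by
        rw [mul_assoc]
        have := mul_le_mul_of_nonneg_left h3 hC.le
        linarith
    _ ≤ (‖g 0‖ + C + 1) * (1 + ‖z‖) ^ (B + 1) := by nlinarith [Real.rpow_nonneg (by linarith : (0:ℝ) ≤ 1 + ‖z‖) (B+1)]

/-- Master integrability criterion by domination. -/
lemma integrable_of_le_poly_exp {m : ℕ} {Y : Type*} [NormedAddCommGroup Y]
    {f : EuclideanSpace ℝ (Fin m) → Y} (hf : AEStronglyMeasurable f volume)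
    (C s c : ℝ) (hc : 0 < c) (v₀ : EuclideanSpace ℝ (Fin m))
    (hb : ∀ u, ‖f u‖ ≤ C * ((1 + ‖u - v₀‖) ^ s * Real.exp (-c * ‖u - v₀‖))) :
    Integrable f volume :=
  ((integrable_poly_exp m v₀ s c hc).const_mul C).mono' hf
    (Filter.Eventually.of_forall hb)

/-- `(1+‖u‖) ≤ (1+‖v‖)(1+‖u-v‖)`. -/
lemma one_add_norm_le {E : Type*} [NormedAddCommGroup E] (u v : E) :
    1 + ‖u‖ ≤ (1 + ‖v‖) * (1 + ‖u - v‖) := by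
  have h := norm_sub_norm_le u v
  have h2 := norm_sub_rev u v
  have := norm_nonneg u; have := norm_nonneg v; have := norm_nonneg (u - v)
  nlinarith [norm_le_norm_add_norm_sub' u v]

lemma deriv_step {E : Type*} [NormedAddCommGroup E] [NormedSpace ℝ E]
    (ψ : E → ℝ) (hψ1 : Differentiable ℝ ψ) (c α : ℝ) (u v : E) :
    HasFDerivAt (fun v' => c * Real.exp (α - ψ (u - v')))
      ((c * Real.exp (α - ψ (u - v))) • fderiv ℝ ψ (u - v)) v := by
  have h1 : HasFDerivAt (fun v' : E => u - v') (-(ContinuousLinearMap.id ℝ E)) v :=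
    (hasFDerivAt_id v).const_sub u
  have h2 : HasFDerivAt (fun v' : E => ψ (u - v'))
      ((fderiv ℝ ψ (u - v)).comp (-(ContinuousLinearMap.id ℝ E))) v :=
    (hψ1 (u - v)).hasFDerivAt.comp v h1
  have h5 := ((h2.const_sub α).exp).const_mul c
  refine h5.congr_fderiv ?_
  ext k
  simp [mul_comm, mul_assoc, mul_left_comm]

set_option maxHeartbeats 1000000 in
/-- score-function (REINFORCE) gradient identity for benignly separable
objectives. For an admissible noise distribution `p` with density `e^{α − ψ(w)}` and
`f(θ, w) = g_out(g_in(θ) + w)` with `g_in` everywhere differentiable and `g_out` Lebesgue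
measurable of polynomial growth, `F(θ) = E_{w∼p}[f(θ, w)]` is well-defined and
differentiable, with `∇F(θ) = E_{w∼p}[(D g_in(θ))ᵀ ∇ψ(w) · f(θ, w)]`. -/
theorem reinforce_separable {m d : ℕ}
    (p : Measure (EuclideanSpace ℝ (Fin m))) [IsProbabilityMeasure p]
    (ψ : EuclideanSpace ℝ (Fin m) → ℝ) (α a b : ℝ) (ha : 0 < a)
    (hp : p = volume.withDensity fun w => ENNReal.ofReal (Real.exp (α - ψ w)))
    (hψlb : ∀ w, a * ‖w‖ - b ≤ ψ w)
    (hψ1 : Differentiable ℝ ψ)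
    (hψ2 : Differentiable ℝ (fun w => fderiv ℝ ψ w))
    (hψ3 : PolyGrowth (fun w => fderiv ℝ (fun w' => fderiv ℝ ψ w') w))
    (gin : EuclideanSpace ℝ (Fin d) → EuclideanSpace ℝ (Fin m))
    (hgin : Differentiable ℝ gin)
    (gout : EuclideanSpace ℝ (Fin m) → ℝ)
    (hgoutMeas : AEMeasurable gout volume) (hgoutGrowth : PolyGrowth gout) :
    let F : EuclideanSpace ℝ (Fin d) → ℝ := fun θ => ∫ w, gout (gin θ + w) ∂p
    ∀ θ, Integrable (fun w => gout (gin θ + w)) p ∧ DifferentiableAt ℝ F θ ∧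
      gradient F θ = ∫ w, gout (gin θ + w) •
        (ContinuousLinearMap.adjoint (fderiv ℝ gin θ)) (gradient ψ w) ∂p := by
  intro F
  -- growth constants
  obtain ⟨C₂, b₂, hC₂, hb₂, hgo⟩ := polyGrowth_norm hgoutGrowth
  obtain ⟨C₀, B₀, hC₀, hB₀, hψ3'⟩ := polyGrowth_norm hψ3
  obtain ⟨C₁, hC₁, hgrad⟩ := growth_of_deriv_growth hψ2 hC₀ hB₀ hψ3'
  obtain ⟨B₁, hB₁, hgrad⟩ : ∃ B₁ : ℝ, 0 < B₁ ∧
      ∀ z, ‖fderiv ℝ ψ z‖ ≤ C₁ * (1 + ‖z‖) ^ B₁ :=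
    ⟨B₀ + 1, by positivity, hgrad⟩
  clear hψ3' hB₀ hC₀
  -- density
  set ρ : EuclideanSpace ℝ (Fin m) → ℝ := fun w => Real.exp (α - ψ w) with hρdef
  have hρpos : ∀ w, 0 < ρ w := fun w => Real.exp_pos _
  have hρcont : Continuous ρ := (continuous_const.sub hψ1.continuous).rexp
  have hρle : ∀ w, ρ w ≤ Real.exp (α + b) * Real.exp (-a * ‖w‖) := by
    intro w
    rw [← Real.exp_add]
    show Real.exp (α - ψ w) ≤ _
    exact Real.exp_le_exp.mpr (by have := hψlb w; linarith)
  set ρn : EuclideanSpace ℝ (Fin m) → NNReal := fun w => (ρ w).toNNReal with hρndef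
  have hρnmeas : Measurable ρn := continuous_real_toNNReal.comp hρcont |>.measurable
  have hρncoe : ∀ w, ((ρn w : ℝ)) = ρ w := fun w => Real.coe_toNNReal _ (hρpos w).le
  have hp' : p = volume.withDensity fun w => ((ρn w : ENNReal)) := hp
  -- transfer of integrability from p to volume
  have transferA : ∀ {Y : Type} [NormedAddCommGroup Y] [NormedSpace ℝ Y] (g : EuclideanSpace ℝ (Fin m) → Y),
      Integrable g p ↔ Integrable (fun w => ρ w • g w) volume := by
    intro Y _ _ g
    rw [hp', integrable_withDensity_iff_integrable_smul₀ hρnmeas.aemeasurable]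
    exact integrable_congr (Filter.Eventually.of_forall fun w => by
      show ρn w • g w = ρ w • g w
      rw [NNReal.smul_def, hρncoe])
  -- transfer of integrals from p to volume
  have transferB : ∀ {Y : Type} [NormedAddCommGroup Y] [NormedSpace ℝ Y] (g : EuclideanSpace ℝ (Fin m) → Y),
      ∫ w, g w ∂p = ∫ w, ρ w • g w ∂volume := by
    intro Y _ _ g
    rw [hp', integral_withDensity_eq_integral_smul hρnmeas]
    exact integral_congr_ae (Filter.Eventually.of_forall fun w => by
      show ρn w • g w = ρ w • g w
      rw [NNReal.smul_def, hρncoe])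
  intro θ
  have htrans : ∀ θ' : EuclideanSpace ℝ (Fin d),
      AEMeasurable (fun w => gout (gin θ' + w)) volume := fun θ' =>
    hgoutMeas.comp_quasiMeasurePreserving
      (measurePreserving_add_left volume (gin θ')).quasiMeasurePreserving
  have hrpow_prod : ∀ (x y : EuclideanSpace ℝ (Fin m)) (s : ℝ), 0 ≤ s →
      (1 + ‖x‖) ^ s ≤ (1 + ‖y‖) ^ s * (1 + ‖x - y‖) ^ s := by
    intro x y s hs
    rw [← Real.mul_rpow (by positivity) (by positivity)]
    exact Real.rpow_le_rpow (by positivity) (one_add_norm_le x y) hs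
  set v₀ : EuclideanSpace ℝ (Fin m) := gin θ with hv₀
  -- Part 1 : integrability
  have part1 : Integrable (fun w => gout (gin θ + w)) p := by
    rw [transferA]
    apply integrable_of_le_poly_exp
      (hρcont.aestronglyMeasurable.smul (htrans θ).aestronglyMeasurable)
      (Real.exp (α + b) * (C₂ * (1 + ‖v₀‖) ^ b₂)) b₂ a ha 0
    intro u
    rw [sub_zero]
    have e1 : ‖ρ u • gout (gin θ + u)‖ = ρ u * ‖gout (gin θ + u)‖ := by
      rw [norm_smul, Real.norm_eq_abs (ρ u), abs_of_pos (hρpos u)]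
    show ‖ρ u • gout (gin θ + u)‖ ≤ _
    rw [e1]
    have p1 : ‖gout (gin θ + u)‖ ≤ C₂ * ((1 + ‖v₀‖) ^ b₂ * (1 + ‖u‖) ^ b₂) := by
      calc ‖gout (gin θ + u)‖ ≤ C₂ * (1 + ‖gin θ + u‖) ^ b₂ := hgo _
        _ ≤ C₂ * ((1 + ‖v₀‖) ^ b₂ * (1 + ‖(gin θ + u) - v₀‖) ^ b₂) :=
            mul_le_mul_of_nonneg_left (hrpow_prod _ _ _ hb₂.le) hC₂.le
        _ = C₂ * ((1 + ‖v₀‖) ^ b₂ * (1 + ‖u‖) ^ b₂) := by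
            rw [hv₀, add_sub_cancel_left]
    calc ρ u * ‖gout (gin θ + u)‖
        ≤ (Real.exp (α + b) * Real.exp (-a * ‖u‖)) *
            (C₂ * ((1 + ‖v₀‖) ^ b₂ * (1 + ‖u‖) ^ b₂)) :=
          mul_le_mul (hρle u) p1 (norm_nonneg _) (by positivity)
      _ = Real.exp (α + b) * (C₂ * (1 + ‖v₀‖) ^ b₂) *
            ((1 + ‖u‖) ^ b₂ * Real.exp (-a * ‖u‖)) := by ring
  refine ⟨part1, ?_⟩
  -- the parametric family after substitution
  set Gf : EuclideanSpace ℝ (Fin m) → EuclideanSpace ℝ (Fin m) → ℝ :=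
    fun v u => gout u * ρ (u - v) with hGfdef
  set Gf' : EuclideanSpace ℝ (Fin m) → EuclideanSpace ℝ (Fin m) →
      (EuclideanSpace ℝ (Fin m) →L[ℝ] ℝ) :=
    fun v u => (gout u * ρ (u - v)) • fderiv ℝ ψ (u - v) with hGf'def
  have hGmeas : ∀ v, AEStronglyMeasurable (fun u => Gf v u) volume := fun v =>
    hgoutMeas.aestronglyMeasurable.mul
      ((hρcont.comp (continuous_id.sub continuous_const)).aestronglyMeasurable)
  -- substitution identity
  have hFh : ∀ θ', F θ' = ∫ u, Gf (gin θ') u := by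
    intro θ'
    show (∫ w, gout (gin θ' + w) ∂p) = _
    rw [transferB]
    rw [← integral_sub_right_eq_self (fun w => ρ w • gout (gin θ' + w)) (gin θ')]
    apply integral_congr_ae
    filter_upwards with u
    show ρ (u - gin θ') • gout (gin θ' + (u - gin θ')) = gout u * ρ (u - gin θ')
    have harg : gin θ' + (u - gin θ') = u := by abel
    rw [harg, smul_eq_mul, mul_comm]
  -- uniform derivative bound on the unit ball around v₀
  set K : ℝ := C₂ * (1 + ‖v₀‖) ^ b₂ * Real.exp (α + b + a) * (C₁ * 2 ^ B₁) with hKdef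
  have hbound : ∀ u, ∀ v ∈ Metric.ball v₀ 1, ‖Gf' v u‖ ≤
      K * ((1 + ‖u - v₀‖) ^ (b₂ + B₁) * Real.exp (-a * ‖u - v₀‖)) := by
    intro u v hv
    have hvv : ‖v - v₀‖ < 1 := by
      simpa [dist_eq_norm] using hv
    have hn1 : ‖u - v₀‖ - 1 ≤ ‖u - v‖ := by
      have h := norm_add_le (u - v) (v - v₀)
      have h2 : (u - v) + (v - v₀) = u - v₀ := by abel
      rw [h2] at h
      linarith
    have hn2 : ‖u - v‖ ≤ ‖u - v₀‖ + 1 := by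
      have h := norm_add_le (u - v₀) (v₀ - v)
      have h2 : (u - v₀) + (v₀ - v) = u - v := by abel
      rw [h2] at h
      have h3 : ‖v₀ - v‖ = ‖v - v₀‖ := norm_sub_rev _ _
      linarith
    have e1 : ‖Gf' v u‖ = ‖gout u‖ * ρ (u - v) * ‖fderiv ℝ ψ (u - v)‖ := by
      show ‖(gout u * ρ (u - v)) • fderiv ℝ ψ (u - v)‖ = _
      rw [norm_smul, norm_mul, Real.norm_eq_abs (ρ (u - v)), abs_of_pos (hρpos _)]
    have p1 : ‖gout u‖ ≤ C₂ * ((1 + ‖v₀‖) ^ b₂ * (1 + ‖u - v₀‖) ^ b₂) :=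
      (hgo u).trans (mul_le_mul_of_nonneg_left (hrpow_prod _ _ _ hb₂.le) hC₂.le)
    have p2 : ρ (u - v) ≤ Real.exp (α + b + a) * Real.exp (-a * ‖u - v₀‖) := by
      calc ρ (u - v) ≤ Real.exp (α + b) * Real.exp (-a * ‖u - v‖) := hρle _
        _ ≤ Real.exp (α + b) * Real.exp (a + -a * ‖u - v₀‖) := by
            apply mul_le_mul_of_nonneg_left _ (Real.exp_pos _).le
            apply Real.exp_le_exp.mpr
            nlinarith
        _ = Real.exp (α + b + a) * Real.exp (-a * ‖u - v₀‖) := by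
            rw [← Real.exp_add, ← Real.exp_add]
            ring_nf
    have p3 : ‖fderiv ℝ ψ (u - v)‖ ≤ C₁ * 2 ^ B₁ * (1 + ‖u - v₀‖) ^ B₁ := by
      calc ‖fderiv ℝ ψ (u - v)‖ ≤ C₁ * (1 + ‖u - v‖) ^ B₁ := hgrad _
        _ ≤ C₁ * (2 * (1 + ‖u - v₀‖)) ^ B₁ := by
            apply mul_le_mul_of_nonneg_left _ hC₁.le
            apply Real.rpow_le_rpow (by positivity) (by nlinarith [norm_nonneg (u - v₀)]) hB₁.le
        _ = C₁ * 2 ^ B₁ * (1 + ‖u - v₀‖) ^ B₁ := by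
            rw [Real.mul_rpow (by norm_num) (by positivity)]
            ring
    rw [e1]
    have hnn1 : (0:ℝ) ≤ ρ (u - v) := (hρpos _).le
    have hnn2 : (0:ℝ) ≤ C₂ * ((1 + ‖v₀‖) ^ b₂ * (1 + ‖u - v₀‖) ^ b₂) := by positivity
    calc ‖gout u‖ * ρ (u - v) * ‖fderiv ℝ ψ (u - v)‖
        ≤ (C₂ * ((1 + ‖v₀‖) ^ b₂ * (1 + ‖u - v₀‖) ^ b₂)) *
            (Real.exp (α + b + a) * Real.exp (-a * ‖u - v₀‖)) *
            (C₁ * 2 ^ B₁ * (1 + ‖u - v₀‖) ^ B₁) := by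
          apply mul_le_mul (mul_le_mul p1 p2 hnn1 hnn2) p3 (norm_nonneg _) (by positivity)
      _ = K * ((1 + ‖u - v₀‖) ^ (b₂ + B₁) * Real.exp (-a * ‖u - v₀‖)) := by
          rw [hKdef, Real.rpow_add (by positivity : (0:ℝ) < 1 + ‖u - v₀‖)]
          ring
  have hbound_int : Integrable (fun u : EuclideanSpace ℝ (Fin m) =>
      K * ((1 + ‖u - v₀‖) ^ (b₂ + B₁) * Real.exp (-a * ‖u - v₀‖))) volume :=
    ((integrable_poly_exp m v₀ (b₂ + B₁) a ha).const_mul K)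
  have hGint : Integrable (fun u => Gf v₀ u) volume := by
    apply integrable_of_le_poly_exp (hGmeas v₀)
      (C₂ * (1 + ‖v₀‖) ^ b₂ * Real.exp (α + b)) b₂ a ha v₀
    intro u
    have e1 : ‖Gf v₀ u‖ = ‖gout u‖ * ρ (u - v₀) := by
      show ‖gout u * ρ (u - v₀)‖ = _
      rw [norm_mul, Real.norm_eq_abs (ρ (u - v₀)), abs_of_pos (hρpos _)]
    have p1 : ‖gout u‖ ≤ C₂ * ((1 + ‖v₀‖) ^ b₂ * (1 + ‖u - v₀‖) ^ b₂) :=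
      (hgo u).trans (mul_le_mul_of_nonneg_left (hrpow_prod _ _ _ hb₂.le) hC₂.le)
    rw [e1]
    calc ‖gout u‖ * ρ (u - v₀)
        ≤ (C₂ * ((1 + ‖v₀‖) ^ b₂ * (1 + ‖u - v₀‖) ^ b₂)) *
            (Real.exp (α + b) * Real.exp (-a * ‖u - v₀‖)) :=
          mul_le_mul p1 (hρle _) (hρpos _).le (by positivity)
      _ = C₂ * (1 + ‖v₀‖) ^ b₂ * Real.exp (α + b) *
            ((1 + ‖u - v₀‖) ^ b₂ * Real.exp (-a * ‖u - v₀‖)) := by ring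
  have hG'meas : AEStronglyMeasurable (fun u => Gf' v₀ u) volume := by
    apply AEStronglyMeasurable.smul (f := fun u => gout u * ρ (u - v₀)) (g := fun u => fderiv ℝ ψ (u - v₀))
    · exact hgoutMeas.aestronglyMeasurable.mul
        ((hρcont.comp (continuous_id.sub continuous_const)).aestronglyMeasurable)
    · exact (hψ2.continuous.comp (continuous_id.sub continuous_const)).aestronglyMeasurable
  have h_diff : ∀ᵐ u ∂(volume : Measure (EuclideanSpace ℝ (Fin m))),
      ∀ v ∈ Metric.ball v₀ 1, HasFDerivAt (fun v' => Gf v' u) (Gf' v u) v := by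
    filter_upwards with u
    intro v _
    exact deriv_step ψ hψ1 (gout u) α u v
  have key : HasFDerivAt (fun v => ∫ u, Gf v u) (∫ u, Gf' v₀ u) v₀ :=
    hasFDerivAt_integral_of_dominated_of_fderiv_le (Metric.ball_mem_nhds v₀ zero_lt_one)
      (Filter.Eventually.of_forall fun v => hGmeas v) hGint hG'meas
      (Filter.Eventually.of_forall fun u => hbound u) hbound_int h_diff
  have hInt_G' : Integrable (fun u => Gf' v₀ u) volume :=
    integrable_of_le_poly_exp hG'meas K (b₂ + B₁) a ha v₀
      (fun u => hbound u v₀ (Metric.mem_ball_self one_pos))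
  have hF_eq : F = (fun v => ∫ u, Gf v u) ∘ gin := funext hFh
  have hFderiv : HasFDerivAt F ((∫ u, Gf' v₀ u).comp (fderiv ℝ gin θ)) θ := by
    rw [hF_eq]
    exact key.comp θ (hgin θ).hasFDerivAt
  refine ⟨hFderiv.differentiableAt, ?_⟩
  -- Part 3: the gradient formula
  set Dg : EuclideanSpace ℝ (Fin d) →L[ℝ] EuclideanSpace ℝ (Fin m) := fderiv ℝ gin θ with hDg
  set Adg := ContinuousLinearMap.adjoint Dg with hAdg
  have hgradψ : ∀ w, gradient ψ w = (InnerProductSpace.toDual ℝ _).symm (fderiv ℝ ψ w) :=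
    fun w => rfl
  have hgradnorm : ∀ w, ‖gradient ψ w‖ = ‖fderiv ℝ ψ w‖ := fun w => by
    rw [hgradψ]
    exact LinearIsometryEquiv.norm_map _ _
  have hgradcont : Continuous fun w => gradient ψ w := by
    simp only [hgradψ]
    exact (LinearIsometryEquiv.continuous _).comp hψ2.continuous
  have hR : Integrable (fun w => gout (gin θ + w) • Adg (gradient ψ w)) p := by
    rw [transferA]
    have hmeasR : AEStronglyMeasurable
        (fun w => ρ w • (gout (gin θ + w) • Adg (gradient ψ w))) volume := by
      apply AEStronglyMeasurable.smul hρcont.aestronglyMeasurable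
      apply AEStronglyMeasurable.smul (htrans θ).aestronglyMeasurable
      exact (Adg.continuous.comp hgradcont).aestronglyMeasurable
    apply integrable_of_le_poly_exp hmeasR
      (Real.exp (α + b) * (C₂ * (1 + ‖v₀‖) ^ b₂) * (‖Adg‖ * C₁)) (b₂ + B₁) a ha 0
    intro u
    rw [sub_zero]
    have e1 : ‖ρ u • (gout (gin θ + u) • Adg (gradient ψ u))‖ =
        ρ u * (‖gout (gin θ + u)‖ * ‖Adg (gradient ψ u)‖) := by
      rw [norm_smul, norm_smul, Real.norm_eq_abs (ρ u), abs_of_pos (hρpos u)]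
    rw [e1]
    have p1 : ‖gout (gin θ + u)‖ ≤ C₂ * ((1 + ‖v₀‖) ^ b₂ * (1 + ‖u‖) ^ b₂) := by
      calc ‖gout (gin θ + u)‖ ≤ C₂ * (1 + ‖gin θ + u‖) ^ b₂ := hgo _
        _ ≤ C₂ * ((1 + ‖v₀‖) ^ b₂ * (1 + ‖(gin θ + u) - v₀‖) ^ b₂) :=
            mul_le_mul_of_nonneg_left (hrpow_prod _ _ _ hb₂.le) hC₂.le
        _ = C₂ * ((1 + ‖v₀‖) ^ b₂ * (1 + ‖u‖) ^ b₂) := by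
            rw [hv₀, add_sub_cancel_left]
    have p2 : ‖Adg (gradient ψ u)‖ ≤ ‖Adg‖ * (C₁ * (1 + ‖u‖) ^ B₁) := by
      calc ‖Adg (gradient ψ u)‖ ≤ ‖Adg‖ * ‖gradient ψ u‖ := Adg.le_opNorm _
        _ ≤ ‖Adg‖ * (C₁ * (1 + ‖u‖) ^ B₁) := by
            apply mul_le_mul_of_nonneg_left _ (norm_nonneg _)
            rw [hgradnorm]
            exact hgrad u
    calc ρ u * (‖gout (gin θ + u)‖ * ‖Adg (gradient ψ u)‖)
        ≤ (Real.exp (α + b) * Real.exp (-a * ‖u‖)) *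
            ((C₂ * ((1 + ‖v₀‖) ^ b₂ * (1 + ‖u‖) ^ b₂)) * (‖Adg‖ * (C₁ * (1 + ‖u‖) ^ B₁))) := by
          apply mul_le_mul (hρle u) _ (by positivity) (by positivity)
          apply mul_le_mul p1 p2 (norm_nonneg _) (by positivity)
      _ = Real.exp (α + b) * (C₂ * (1 + ‖v₀‖) ^ b₂) * (‖Adg‖ * C₁) *
            ((1 + ‖u‖) ^ (b₂ + B₁) * Real.exp (-a * ‖u‖)) := by
          rw [Real.rpow_add (by positivity : (0:ℝ) < 1 + ‖u‖)]
          ring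
  -- now the inner-product computation
  apply ext_inner_right ℝ
  intro k
  have lhs1 : (inner ℝ (gradient F θ) k : ℝ) = (fderiv ℝ F θ) k :=
    InnerProductSpace.toDual_symm_apply
  have hfd : fderiv ℝ F θ = (∫ u, Gf' v₀ u).comp Dg := hFderiv.fderiv
  calc (inner ℝ (gradient F θ) k : ℝ) = (fderiv ℝ F θ) k := lhs1
    _ = (∫ u, Gf' v₀ u) (Dg k) := by rw [hfd]; rfl
    _ = ∫ u, (Gf' v₀ u) (Dg k) := ContinuousLinearMap.integral_apply hInt_G' (Dg k)
    _ = ∫ u, ρ (u - v₀) • (gout (gin θ + (u - v₀)) * (fderiv ℝ ψ (u - v₀)) (Dg k)) := by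
        apply integral_congr_ae
        filter_upwards with u
        show ((gout u * ρ (u - v₀)) • fderiv ℝ ψ (u - v₀)) (Dg k) = _
        have harg : gin θ + (u - v₀) = u := by rw [hv₀]; abel
        rw [harg, ContinuousLinearMap.smul_apply, smul_eq_mul, smul_eq_mul]
        ring
    _ = ∫ w, ρ w • (gout (gin θ + w) * (fderiv ℝ ψ w) (Dg k)) :=
        integral_sub_right_eq_self
          (fun w => ρ w • (gout (gin θ + w) * (fderiv ℝ ψ w) (Dg k))) v₀
    _ = ∫ w, gout (gin θ + w) * (fderiv ℝ ψ w) (Dg k) ∂p := (transferB _).symm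
    _ = ∫ w, (inner ℝ (gout (gin θ + w) • Adg (gradient ψ w)) k : ℝ) ∂p := by
        apply integral_congr_ae
        filter_upwards with w
        rw [real_inner_smul_left]
        congr 1
        rw [ContinuousLinearMap.adjoint_inner_left]
        exact (InnerProductSpace.toDual_symm_apply).symm
    _ = (inner ℝ (∫ w, gout (gin θ + w) • Adg (gradient ψ w) ∂p) k : ℝ) := by
        rw [real_inner_comm, ← integral_inner hR]
        exact integral_congr_ae (Filter.Eventually.of_forall fun w => real_inner_comm _ _)
end

section
/- Let σ > 0, let w ∼ N(0, σ²I_m) on ℝ^m, let g: ℝ^d → ℝ^m be everywhere differentiable, and let c: ℝ^m → ℝ be Lebesgue measurable with polynomial growth. Then F(θ) := E_w[c(g(θ) + w)] is well-defined and differentiable, and ∇F(θ) = (1/σ²) · E_w[ (D g(θ))ᵀ w · c(g(θ) + w) ]. -/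
open MeasureTheory

/-- The density of the centered Gaussian measure `N(0, σ²I_m)` on `ℝ^m`. -/
noncomputable def gaussDensity (m : ℕ) (σ : ℝ) (w : EuclideanSpace ℝ (Fin m)) : ℝ :=
  (2 * Real.pi * σ ^ 2) ^ (-(m : ℝ) / 2) * Real.exp (-‖w‖ ^ 2 / (2 * σ ^ 2))

lemma integrable_exp_neg_mul_sq_norm_euclidean {m : ℕ} {b : ℝ} (hb : 0 < b) :
    Integrable (fun v : EuclideanSpace ℝ (Fin m) => Real.exp (-b * ‖v‖ ^ 2)) volume := by
  have h := (GaussianFourier.integrable_cexp_neg_mul_sq_norm_add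
      (b := (b : ℂ)) (by simpa using hb) 0 (0 : EuclideanSpace ℝ (Fin m))).norm
  refine h.congr (Filter.Eventually.of_forall fun v => ?_)
  simp [Complex.norm_exp, ← Complex.ofReal_pow]

lemma rpow_le_exp_mul {t b : ℝ} (ht : 0 ≤ t) (hb : 0 ≤ b) : t ^ b ≤ Real.exp (b * t) := by
  rcases le_or_gt t 1 with h | h
  · exact (Real.rpow_le_one ht h hb).trans (Real.one_le_exp (by positivity))
  · rw [Real.rpow_def_of_pos (by linarith)]
    have hlog : Real.log t ≤ t := (Real.log_le_sub_one_of_pos (by linarith)).trans (by linarith)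
    rw [mul_comm]
    exact Real.exp_le_exp.2 (mul_le_mul_of_nonneg_left hlog hb)

lemma integrable_gauss_bound {m : ℕ} (a b K R cc : ℝ) (hb : 0 ≤ b) (hcc : 0 < cc) (hR : 0 ≤ R) :
    Integrable (fun u : EuclideanSpace ℝ (Fin m) =>
      a * ((1 + (‖u‖ + R) ^ b) * ((1 + ‖u‖ + R) * Real.exp (K * ‖u‖ - cc * ‖u‖ ^ 2))))
      volume := by
  apply Integrable.const_mul
  set M := (1 + Real.exp (b * R)) * ((1 + R) * Real.exp ((b + 1 + K) ^ 2 / (2 * cc))) with hM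
  have hMpos : 0 < M := by positivity
  have key : Integrable (fun u : EuclideanSpace ℝ (Fin m) =>
      M * Real.exp (-(cc/2) * ‖u‖ ^ 2)) volume :=
    (integrable_exp_neg_mul_sq_norm_euclidean (by positivity)).const_mul M
  refine key.mono' ?_ (Filter.Eventually.of_forall fun u => ?_)
  · apply Continuous.aestronglyMeasurable
    have h1 : Continuous fun u : EuclideanSpace ℝ (Fin m) => (‖u‖ + R) ^ b :=
      (continuous_norm.add continuous_const).rpow_const (fun x => Or.inr hb)
    fun_prop
  · set t := ‖u‖ with hts
    have ht : 0 ≤ t := norm_nonneg u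
    rw [Real.norm_eq_abs, abs_of_nonneg (by positivity)]
    have h2 : 1 + (t + R) ^ b ≤ (1 + Real.exp (b * R)) * Real.exp (b * t) := by
      have h1 : (t + R) ^ b ≤ Real.exp (b * R) * Real.exp (b * t) := by
        rw [← Real.exp_add]
        refine (rpow_le_exp_mul (by positivity) hb).trans (Real.exp_le_exp.2 (by ring_nf; rfl))
      have e1 : (1:ℝ) ≤ Real.exp (b * t) := Real.one_le_exp (by positivity)
      nlinarith [Real.exp_pos (b * R)]
    have h3 : 1 + t + R ≤ (1 + R) * Real.exp t := by
      have := Real.add_one_le_exp t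
      nlinarith [Real.exp_pos t]
    have h5 : Real.exp ((b+1+K) * t - cc * t ^ 2) ≤
        Real.exp ((b+1+K) ^ 2 / (2 * cc)) * Real.exp (-(cc/2) * t ^ 2) := by
      rw [← Real.exp_add, Real.exp_le_exp]
      have : (b+1+K) * t - cc/2 * t ^ 2 ≤ (b+1+K) ^ 2 / (2 * cc) := by
        rw [le_div_iff₀ (by positivity)]
        nlinarith [sq_nonneg ((b+1+K) - cc * t)]
      linarith
    have h4 : Real.exp (b * t) * (Real.exp t * Real.exp (K * t - cc * t ^ 2)) =
        Real.exp ((b+1+K) * t - cc * t ^ 2) := by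
      rw [← Real.exp_add, ← Real.exp_add]; congr 1; ring
    calc (1 + (t + R) ^ b) * ((1 + t + R) * Real.exp (K * t - cc * t ^ 2))
        ≤ ((1 + Real.exp (b * R)) * Real.exp (b * t)) *
          (((1 + R) * Real.exp t) * Real.exp (K * t - cc * t ^ 2)) := by
          have e0 : (0:ℝ) < Real.exp (K * t - cc * t ^ 2) := Real.exp_pos _
          apply mul_le_mul h2 (mul_le_mul_of_nonneg_right h3 e0.le) (by positivity) (by positivity)
      _ = ((1 + Real.exp (b * R)) * (1 + R)) *
          (Real.exp (b * t) * (Real.exp t * Real.exp (K * t - cc * t ^ 2))) := by ring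
      _ = ((1 + Real.exp (b * R)) * (1 + R)) * Real.exp ((b+1+K) * t - cc * t ^ 2) := by rw [h4]
      _ ≤ ((1 + Real.exp (b * R)) * (1 + R)) *
          (Real.exp ((b+1+K) ^ 2 / (2 * cc)) * Real.exp (-(cc/2) * t ^ 2)) :=
          mul_le_mul_of_nonneg_left h5 (by positivity)
      _ = M * Real.exp (-(cc/2) * t ^ 2) := by rw [hM]; ring

lemma gaussDensity_pos {m : ℕ} {σ : ℝ} (hσ : 0 < σ) (w : EuclideanSpace ℝ (Fin m)) :
    0 < gaussDensity m σ w := by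
  unfold gaussDensity
  have : (0:ℝ) < 2 * Real.pi * σ ^ 2 := by positivity
  positivity

lemma continuous_gaussDensity (m : ℕ) (σ : ℝ) : Continuous (gaussDensity m σ) := by
  unfold gaussDensity
  fun_prop

lemma hasFDerivAt_gaussDensity_sub {m : ℕ} {σ : ℝ}
    (u v : EuclideanSpace ℝ (Fin m)) :
    HasFDerivAt (fun v => gaussDensity m σ (u - v))
      ((gaussDensity m σ (u - v) * (σ ^ 2)⁻¹) • innerSL ℝ (u - v)) v := by
  have h1 : HasFDerivAt (fun v : EuclideanSpace ℝ (Fin m) => u - v)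
      (-(ContinuousLinearMap.id ℝ _)) v := (hasFDerivAt_id v).const_sub u
  have h2 := h1.norm_sq
  have h3 := (h2.const_mul ((2 * σ ^ 2)⁻¹)).neg
  have h4 := h3.exp
  have h5 := h4.const_mul ((2 * Real.pi * σ ^ 2) ^ (-(m : ℝ) / 2))
  have hfun : (fun v => gaussDensity m σ (u - v)) =
      fun v => (2 * Real.pi * σ ^ 2) ^ (-(m : ℝ) / 2) *
        Real.exp (-((2 * σ ^ 2)⁻¹ * ‖u - v‖ ^ 2)) := by
    funext w
    unfold gaussDensity
    congr 1
    rw [neg_div, div_eq_inv_mul]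
  rw [hfun]
  refine h5.congr_fderiv ?_
  ext h
  simp only [ContinuousLinearMap.smul_apply, ContinuousLinearMap.neg_apply,
    ContinuousLinearMap.comp_apply, ContinuousLinearMap.coe_id', id_eq, innerSL_apply_apply,
    inner_neg_right, smul_eq_mul, gaussDensity, neg_div, div_eq_inv_mul, Pi.neg_apply]
  rw [mul_inv]
  ring

set_option maxHeartbeats 2000000 in
set_option synthInstance.maxHeartbeats 400000 in
/-- the score-function (REINFORCE) identity for Gaussian smoothing.
For `w ∼ N(0, σ²I_m)`, `g` everywhere differentiable and `c` Lebesgue measurable of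
polynomial growth, `F(θ) = E_w[c(g(θ) + w)]` is well-defined and differentiable, and
`∇F(θ) = (1/σ²) E_w[(D g(θ))ᵀ w · c(g(θ) + w)]`. -/
theorem reinforce_gaussian {m d : ℕ} (σ : ℝ) (hσ : 0 < σ)
    (g : EuclideanSpace ℝ (Fin d) → EuclideanSpace ℝ (Fin m))
    (hg : Differentiable ℝ g)
    (c : EuclideanSpace ℝ (Fin m) → ℝ)
    (hcMeas : AEMeasurable c volume) (hcGrowth : PolyGrowth c) :
    let μ := volume.withDensity fun w => ENNReal.ofReal (gaussDensity m σ w)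
    let F : EuclideanSpace ℝ (Fin d) → ℝ := fun θ => ∫ w, c (g θ + w) ∂μ
    ∀ θ, Integrable (fun w => c (g θ + w)) μ ∧ DifferentiableAt ℝ F θ ∧
      gradient F θ = (σ ^ 2)⁻¹ •
        ∫ w, c (g θ + w) • (ContinuousLinearMap.adjoint (fderiv ℝ g θ)) w ∂μ := by
  intro μ F θ
  obtain ⟨a, b, ha, hb, hc⟩ := hcGrowth
  set φ : EuclideanSpace ℝ (Fin m) → ℝ := gaussDensity m σ with hφ
  have hφpos : ∀ w, 0 < φ w := gaussDensity_pos hσ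
  have hφcont : Continuous φ := continuous_gaussDensity m σ
  have hφmeas : Measurable φ := hφcont.measurable
  set C : ℝ := (2 * Real.pi * σ ^ 2) ^ (-(m : ℝ) / 2) with hC
  have h2π : (0:ℝ) < 2 * Real.pi * σ ^ 2 := by positivity
  have hCpos : 0 < C := Real.rpow_pos_of_pos h2π _
  have hσ2 : (0:ℝ) < σ ^ 2 := by positivity
  set ρ : EuclideanSpace ℝ (Fin m) → NNReal := fun w => (φ w).toNNReal with hρ
  have hρmeas : Measurable ρ := hφmeas.real_toNNReal
  have hμ : μ = volume.withDensity (fun w => ((ρ w : NNReal) : ENNReal)) := rfl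
  have hρsmul : ∀ (w : EuclideanSpace ℝ (Fin m)) (x : ℝ), ρ w • x = φ w * x := by
    intro w x
    rw [hρ, NNReal.smul_def, Real.coe_toNNReal _ (hφpos w).le, smul_eq_mul]
  set v₀ : EuclideanSpace ℝ (Fin m) := g θ with hv₀
  set R : ℝ := ‖v₀‖ + 1 with hR
  have hRpos : (0:ℝ) < R := by positivity
  -- pointwise exponential bound
  have hexp : ∀ (v' u : EuclideanSpace ℝ (Fin m)), ‖v' - v₀‖ ≤ 1 →
      Real.exp (-‖u - v'‖ ^ 2 / (2 * σ ^ 2)) ≤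
      Real.exp ((R / σ ^ 2) * ‖u‖ - (2 * σ ^ 2)⁻¹ * ‖u‖ ^ 2) := by
    intro v' u hvv
    rw [Real.exp_le_exp]
    have h1 : ‖v'‖ ≤ R := by
      have := norm_sub_norm_le v' v₀
      rw [hR]; linarith
    have h2 : ‖u‖ - ‖v'‖ ≤ ‖u - v'‖ := norm_sub_norm_le u v'
    have h3 : ‖u‖ ^ 2 - 2 * R * ‖u‖ ≤ ‖u - v'‖ ^ 2 := by
      rcases le_or_gt ‖u‖ R with hcase | hcase
      · nlinarith [norm_nonneg (u - v'), norm_nonneg u]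
      · have h5 : (0:ℝ) ≤ ‖u‖ - R := by linarith
        have h6 : ‖u‖ - R ≤ ‖u - v'‖ := by linarith
        nlinarith [mul_self_le_mul_self h5 h6, sq_nonneg R]
    have h4 : -‖u - v'‖ ^ 2 ≤ 2 * R * ‖u‖ - ‖u‖ ^ 2 := by linarith
    calc -‖u - v'‖ ^ 2 / (2 * σ ^ 2) ≤ (2 * R * ‖u‖ - ‖u‖ ^ 2) / (2 * σ ^ 2) := by gcongr
      _ = (R / σ ^ 2) * ‖u‖ - (2 * σ ^ 2)⁻¹ * ‖u‖ ^ 2 := by field_simp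
  -- growth bound on c
  have hcabs : ∀ u : EuclideanSpace ℝ (Fin m), ‖c u‖ ≤ a * (1 + (‖u‖ + R) ^ b) := by
    intro u
    refine (hc u).trans ?_
    have : ‖u‖ ^ b ≤ (‖u‖ + R) ^ b :=
      Real.rpow_le_rpow (norm_nonneg u) (by linarith) hb.le
    nlinarith
  -- (IA): integrand conversion integrability, for any shift v
  have hIA : ∀ v : EuclideanSpace ℝ (Fin m),
      Integrable (fun w : EuclideanSpace ℝ (Fin m) => φ w * c (v + w)) volume := by
    intro v
    have hbnd := integrable_gauss_bound (m := m) (a * C) b 0 (‖v‖ + 1) ((2 * σ ^ 2)⁻¹)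
      hb.le (by positivity) (by positivity)
    refine hbnd.mono' ?_ (Filter.Eventually.of_forall fun w => ?_)
    · exact ((hφcont.aemeasurable).mul
        (hcMeas.comp_quasiMeasurePreserving
          (measurePreserving_add_left volume v).quasiMeasurePreserving)).aestronglyMeasurable
    · have h1 : ‖c (v + w)‖ ≤ a * (1 + (‖w‖ + (‖v‖ + 1)) ^ b) := by
        refine (hc (v + w)).trans ?_
        have h2 : ‖v + w‖ ^ b ≤ (‖w‖ + (‖v‖ + 1)) ^ b := by
          apply Real.rpow_le_rpow (norm_nonneg _) _ hb.le
          have := norm_add_le v w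
          linarith
        nlinarith
      have hφw : φ w = C * Real.exp (0 * ‖w‖ - (2 * σ ^ 2)⁻¹ * ‖w‖ ^ 2) := by
        rw [hφ]; unfold gaussDensity; rw [← hC]
        congr 1
        rw [neg_div, div_eq_inv_mul, zero_mul, zero_sub]
      rw [norm_mul, Real.norm_eq_abs (φ w), abs_of_nonneg (hφpos w).le, hφw]
      have h6 : (1:ℝ) ≤ 1 + ‖w‖ + (‖v‖ + 1) := by
        have := norm_nonneg w; have := norm_nonneg v; linarith
      calc C * Real.exp (0 * ‖w‖ - (2 * σ ^ 2)⁻¹ * ‖w‖ ^ 2) * ‖c (v + w)‖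
          ≤ C * Real.exp (0 * ‖w‖ - (2 * σ ^ 2)⁻¹ * ‖w‖ ^ 2) * (a * (1 + (‖w‖ + (‖v‖ + 1)) ^ b)) := by
            apply mul_le_mul_of_nonneg_left h1 (by positivity)
        _ = a * C * ((1 + (‖w‖ + (‖v‖ + 1)) ^ b) * (1 *
            Real.exp (0 * ‖w‖ - (2 * σ ^ 2)⁻¹ * ‖w‖ ^ 2))) := by ring
        _ ≤ a * C * ((1 + (‖w‖ + (‖v‖ + 1)) ^ b) * ((1 + ‖w‖ + (‖v‖ + 1)) *
            Real.exp (0 * ‖w‖ - (2 * σ ^ 2)⁻¹ * ‖w‖ ^ 2))) := by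
            gcongr
  -- big bound for derivative family
  set B : EuclideanSpace ℝ (Fin m) → ℝ := fun u =>
      (a * (C * (σ ^ 2)⁻¹)) * ((1 + (‖u‖ + R) ^ b) * ((1 + ‖u‖ + R) *
        Real.exp ((R / σ ^ 2) * ‖u‖ - (2 * σ ^ 2)⁻¹ * ‖u‖ ^ 2))) with hB
  have hbigB : Integrable B volume :=
    integrable_gauss_bound _ _ _ _ _ hb.le (by positivity) hRpos.le
  have hnormv' : ∀ v' : EuclideanSpace ℝ (Fin m), ‖v' - v₀‖ ≤ 1 → ‖v'‖ ≤ R := by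
    intro v' hvv
    have := norm_sub_norm_le v' v₀
    rw [hR]; linarith
  have hφle : ∀ (v' u : EuclideanSpace ℝ (Fin m)), ‖v' - v₀‖ ≤ 1 →
      φ (u - v') ≤ C * Real.exp ((R / σ ^ 2) * ‖u‖ - (2 * σ ^ 2)⁻¹ * ‖u‖ ^ 2) := by
    intro v' u hvv
    have h2 := hexp v' u hvv
    rw [hφ]; unfold gaussDensity; rw [← hC]
    exact mul_le_mul_of_nonneg_left h2 hCpos.le
  have hkey : ∀ (v' u : EuclideanSpace ℝ (Fin m)), ‖v' - v₀‖ ≤ 1 →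
      ‖c u‖ * (φ (u - v') * ((σ ^ 2)⁻¹ * ‖u - v'‖)) ≤ B u := by
    intro v' u hvv
    have h3 := hcabs u
    have h4 : ‖u - v'‖ ≤ 1 + ‖u‖ + R := by
      have := norm_sub_le u v'
      have := hnormv' v' hvv
      linarith
    have inner1 : (σ ^ 2)⁻¹ * ‖u - v'‖ ≤ (σ ^ 2)⁻¹ * (1 + ‖u‖ + R) :=
      mul_le_mul_of_nonneg_left h4 (by positivity)
    have inner2 : φ (u - v') * ((σ ^ 2)⁻¹ * ‖u - v'‖) ≤
        (C * Real.exp ((R / σ ^ 2) * ‖u‖ - (2 * σ ^ 2)⁻¹ * ‖u‖ ^ 2)) *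
          ((σ ^ 2)⁻¹ * (1 + ‖u‖ + R)) :=
      mul_le_mul (hφle v' u hvv) inner1 (by positivity) (by positivity)
    have total : ‖c u‖ * (φ (u - v') * ((σ ^ 2)⁻¹ * ‖u - v'‖)) ≤
        (a * (1 + (‖u‖ + R) ^ b)) *
          ((C * Real.exp ((R / σ ^ 2) * ‖u‖ - (2 * σ ^ 2)⁻¹ * ‖u‖ ^ 2)) *
            ((σ ^ 2)⁻¹ * (1 + ‖u‖ + R))) :=
      mul_le_mul h3 inner2
        (mul_nonneg (hφpos _).le (by positivity)) (by positivity)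
    refine total.trans (le_of_eq ?_)
    rw [hB]; ring
  -- integrability of the integrand of H
  have hIB : Integrable (fun u => c u * φ (u - v₀)) volume := by
    have hbnd := integrable_gauss_bound (m := m) (a * C) b (R / σ ^ 2) R ((2 * σ ^ 2)⁻¹)
      hb.le (by positivity) hRpos.le
    refine hbnd.mono' ?_ (Filter.Eventually.of_forall fun u => ?_)
    · exact (hcMeas.mul
        ((hφcont.comp (continuous_id.sub continuous_const)).aemeasurable)).aestronglyMeasurable
    · rw [norm_mul, Real.norm_eq_abs (φ _), abs_of_nonneg (hφpos _).le]
      have h1 := hcabs u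
      have h2 := hφle v₀ u (by simp)
      have h6 : (1:ℝ) ≤ 1 + ‖u‖ + R := by
        have := norm_nonneg u; linarith
      calc ‖c u‖ * φ (u - v₀)
          ≤ (a * (1 + (‖u‖ + R) ^ b)) *
            (C * Real.exp ((R / σ ^ 2) * ‖u‖ - (2 * σ ^ 2)⁻¹ * ‖u‖ ^ 2)) :=
            mul_le_mul h1 h2 (hφpos _).le (by positivity)
        _ = (a * C) * ((1 + (‖u‖ + R) ^ b) * (1 *
            Real.exp ((R / σ ^ 2) * ‖u‖ - (2 * σ ^ 2)⁻¹ * ‖u‖ ^ 2))) := by ring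
        _ ≤ (a * C) * ((1 + (‖u‖ + R) ^ b) * ((1 + ‖u‖ + R) *
            Real.exp ((R / σ ^ 2) * ‖u‖ - (2 * σ ^ 2)⁻¹ * ‖u‖ ^ 2))) := by gcongr
  -- measurability of the scalar weight
  have hsm : AEStronglyMeasurable (fun u => c u * (φ (u - v₀) * (σ ^ 2)⁻¹)) volume :=
    (hcMeas.mul
      (((hφcont.comp (continuous_id.sub continuous_const)).aemeasurable).mul
        aemeasurable_const)).aestronglyMeasurable
  have hnormsmul : ∀ (v' u : EuclideanSpace ℝ (Fin m)),
      ‖c u * (φ (u - v') * (σ ^ 2)⁻¹)‖ = ‖c u‖ * (φ (u - v') * (σ ^ 2)⁻¹) := by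
    intro v' u
    rw [norm_mul, norm_mul, Real.norm_eq_abs (φ _), abs_of_nonneg (hφpos _).le,
      Real.norm_eq_abs ((σ ^ 2)⁻¹), abs_of_nonneg (by positivity)]
  -- integrability of the derivative family (CLM-valued)
  have hIC : Integrable
      (fun u => (c u * (φ (u - v₀) * (σ ^ 2)⁻¹)) • innerSL ℝ (u - v₀)) volume := by
    refine hbigB.mono' ?_ (Filter.Eventually.of_forall fun u => ?_)
    · exact hsm.smul
        ((innerSL ℝ).continuous.comp (continuous_id.sub continuous_const)).aestronglyMeasurable
    · have hns := norm_smul (c u * (φ (u - v₀) * (σ ^ 2)⁻¹)) ((innerSL ℝ) (u - v₀))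
      rw [hns, innerSL_apply_norm, hnormsmul]
      refine le_trans (le_of_eq (by ring)) (hkey v₀ u (by simp))
  -- integrability of the vector-valued version
  have hID : Integrable
      (fun u => (c u * (φ (u - v₀) * (σ ^ 2)⁻¹)) • (u - v₀)) volume := by
    refine hbigB.mono' ?_ (Filter.Eventually.of_forall fun u => ?_)
    · exact hsm.smul (continuous_id.sub continuous_const).aestronglyMeasurable
    · rw [norm_smul, hnormsmul]
      refine le_trans (le_of_eq (by ring)) (hkey v₀ u (by simp))
  -- the smoothed function H
  set H : EuclideanSpace ℝ (Fin m) → ℝ := fun v => ∫ u, c u * φ (u - v) with hH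
  have hFH : F = fun θ' => H (g θ') := by
    funext θ'
    show (∫ w, c (g θ' + w) ∂μ) = _
    rw [hμ, integral_withDensity_eq_integral_smul hρmeas]
    have e : (fun w => ρ w • c (g θ' + w)) =
        fun w => (fun u => c u * φ (u - g θ')) (g θ' + w) := by
      funext w
      rw [hρsmul]
      simp [add_sub_cancel_left, mul_comm]
    rw [e]
    exact integral_add_left_eq_self (fun u => c u * φ (u - g θ')) (g θ')
  -- differentiation under the integral sign
  have hconv : HasFDerivAt H
      (∫ u, (c u * (φ (u - v₀) * (σ ^ 2)⁻¹)) • innerSL ℝ (u - v₀) ∂volume) v₀ := by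
    rw [hH]
    apply hasFDerivAt_integral_of_dominated_of_fderiv_le
      (F' := fun v u => (c u * (φ (u - v) * (σ ^ 2)⁻¹)) • innerSL ℝ (u - v))
      (bound := B) (Metric.ball_mem_nhds v₀ one_pos)
    · exact Filter.Eventually.of_forall fun v => (hcMeas.mul
        ((hφcont.comp (continuous_id.sub continuous_const)).aemeasurable)).aestronglyMeasurable
    · exact hIB
    · exact hIC.aestronglyMeasurable
    · refine Filter.Eventually.of_forall fun u => fun v hv => ?_
      have hns := norm_smul (c u * (φ (u - v) * (σ ^ 2)⁻¹)) ((innerSL ℝ) (u - v))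
      rw [hns, innerSL_apply_norm, hnormsmul]
      refine le_trans (le_of_eq (by ring)) (hkey v u ?_)
      have := Metric.mem_ball.mp hv
      rw [← dist_eq_norm]
      exact this.le
    · exact hbigB
    · refine Filter.Eventually.of_forall fun u => fun v hv => ?_
      have hd := (hasFDerivAt_gaussDensity_sub (σ := σ) u v).const_mul (c u)
      rw [← hφ] at hd
      have : c u • ((φ (u - v) * (σ ^ 2)⁻¹) • innerSL ℝ (u - v)) =
          (c u * (φ (u - v) * (σ ^ 2)⁻¹)) • innerSL ℝ (u - v) := by
        rw [smul_smul]
      rwa [this] at hd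
  -- the gradient vector of H at v₀
  set vstar : EuclideanSpace ℝ (Fin m) :=
    ∫ u, (c u * (φ (u - v₀) * (σ ^ 2)⁻¹)) • (u - v₀) with hvstar
  have hLh : ∀ h : EuclideanSpace ℝ (Fin m),
      (∫ u, (c u * (φ (u - v₀) * (σ ^ 2)⁻¹)) • innerSL ℝ (u - v₀) ∂volume) h =
        (inner ℝ vstar h : ℝ) := by
    intro h
    rw [ContinuousLinearMap.integral_apply hIC]
    have e : ∀ u : EuclideanSpace ℝ (Fin m),
        ((c u * (φ (u - v₀) * (σ ^ 2)⁻¹)) • innerSL ℝ (u - v₀)) h =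
          (inner ℝ h ((c u * (φ (u - v₀) * (σ ^ 2)⁻¹)) • (u - v₀)) : ℝ) := by
      intro u
      rw [ContinuousLinearMap.smul_apply, innerSL_apply_apply, real_inner_smul_right,
        smul_eq_mul]
      rw [real_inner_comm]
    simp_rw [e]
    rw [integral_inner hID h, hvstar]
    exact real_inner_comm _ _
  have hDg := (hg θ).hasFDerivAt
  set Dg := fderiv ℝ g θ with hDgdef
  set L : EuclideanSpace ℝ (Fin m) →L[ℝ] ℝ :=
    ∫ u, (c u * (φ (u - v₀) * (σ ^ 2)⁻¹)) • innerSL ℝ (u - v₀) ∂volume with hL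
  have hFderiv : HasFDerivAt F (L.comp Dg) θ := by
    rw [hFH]
    exact hconv.comp θ hDg
  refine ⟨?_, hFderiv.differentiableAt, ?_⟩
  · rw [hμ, integrable_withDensity_iff_integrable_smul hρmeas]
    exact (hIA v₀).congr (Filter.Eventually.of_forall fun w => (hρsmul w _).symm)
  · have hgrad : HasGradientAt F ((ContinuousLinearMap.adjoint Dg) vstar) θ := by
      rw [hasGradientAt_iff_hasFDerivAt]
      have : (InnerProductSpace.toDual ℝ (EuclideanSpace ℝ (Fin d)))
          ((ContinuousLinearMap.adjoint Dg) vstar) = L.comp Dg := by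
        ext h
        rw [InnerProductSpace.toDual_apply_apply, ContinuousLinearMap.coe_comp',
          Function.comp_apply, ContinuousLinearMap.adjoint_inner_left, ← hLh (Dg h)]
      rw [this]
      exact hFderiv
    rw [hgrad.gradient]
    -- rewrite the RHS μ-integral
    have hρsmulV : ∀ (w : EuclideanSpace ℝ (Fin m)) (x : EuclideanSpace ℝ (Fin d)),
        ρ w • x = φ w • x := by
      intro w x
      rw [hρ, NNReal.smul_def, Real.coe_toNNReal _ (hφpos w).le]
    rw [hμ, integral_withDensity_eq_integral_smul hρmeas]
    have hadj : (ContinuousLinearMap.adjoint Dg) vstar =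
        ∫ u, (c u * (φ (u - v₀) * (σ ^ 2)⁻¹)) •
          (ContinuousLinearMap.adjoint Dg) (u - v₀) := by
      rw [hvstar, ← ContinuousLinearMap.integral_comp_comm _ hID]
      congr 1
      funext u
      exact (ContinuousLinearMap.adjoint Dg).map_smul _ _
    have htrans : (∫ u, (c u * (φ (u - v₀) * (σ ^ 2)⁻¹)) •
          (ContinuousLinearMap.adjoint Dg) (u - v₀)) =
        ∫ w, (c (v₀ + w) * (φ w * (σ ^ 2)⁻¹)) • (ContinuousLinearMap.adjoint Dg) w := by
      have hshift := integral_add_left_eq_self (μ := volume)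
        (fun u => (c u * (φ (u - v₀) * (σ ^ 2)⁻¹)) •
          (ContinuousLinearMap.adjoint Dg) (u - v₀)) v₀
      rw [← hshift]
      congr 1
      funext w
      simp only [add_sub_cancel_left]
    rw [hadj, htrans, ← integral_smul]
    congr 1
    funext w
    rw [hρsmulV]
    simp only [smul_smul]
    congr 1
    ring
end

section
/- Let σ > 0 and let w ∼ N(0, σ²) on ℝ. Let H be the Heaviside function, H(t) = 1 for t ≥ 0 and H(t) = 0 for t < 0, and let F(θ) := E_w[H(θ + w)]. Then for every θ ∈ ℝ, the zeroth-order (score-function) estimator is unbiased: (1/σ²) · E_w[H(θ + w) · w] = F'(θ) = (1/(√(2π)σ)) e^{−θ²/(2σ²)}. -/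
open MeasureTheory Real Filter Set
open scoped NNReal ENNReal

lemma my_integral_gaussianReal (v : ℝ≥0) (hv : v ≠ 0) (f : ℝ → ℝ) :
    ∫ w, f w ∂(ProbabilityTheory.gaussianReal 0 v)
      = ∫ w, f w * ProbabilityTheory.gaussianPDFReal 0 v w := by
  rw [ProbabilityTheory.gaussianReal_of_var_ne_zero 0 hv]
  have h : (ProbabilityTheory.gaussianPDF 0 v)
      = fun x => ((ProbabilityTheory.gaussianPDFReal 0 v x).toNNReal : ℝ≥0∞) := rfl
  rw [h, integral_withDensity_eq_integral_smul
    ((ProbabilityTheory.measurable_gaussianPDFReal 0 v).real_toNNReal) f]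
  congr 1
  ext x
  rw [NNReal.smul_def, smul_eq_mul,
    Real.coe_toNNReal _ (ProbabilityTheory.gaussianPDFReal_nonneg 0 v x), mul_comm]

lemma my_pdf_eq (σ : ℝ) (hσ : 0 < σ) :
    ProbabilityTheory.gaussianPDFReal 0 ⟨σ ^ 2, sq_nonneg σ⟩
      = fun x => (Real.sqrt (2 * π) * σ)⁻¹ * Real.exp (-x ^ 2 / (2 * σ ^ 2)) := by
  ext x
  simp only [ProbabilityTheory.gaussianPDFReal, NNReal.coe_mk, sub_zero]
  change (√(2 * π * σ ^ 2))⁻¹ * rexp (-x ^ 2 / (2 * σ ^ 2)) = _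
  rw [show (2 : ℝ) * π * σ ^ 2 = (2 * π) * σ ^ 2 by ring, Real.sqrt_mul (by positivity),
    Real.sqrt_sq hσ.le]

lemma my_tail (σ : ℝ) (hσ : 0 < σ) (a : ℝ) :
    ∫ w in Set.Ioi a, w * Real.exp (-w ^ 2 / (2 * σ ^ 2))
      = σ ^ 2 * Real.exp (-a ^ 2 / (2 * σ ^ 2)) := by
  have hb : (0 : ℝ) < (2 * σ ^ 2)⁻¹ := by positivity
  have hderiv : ∀ x ∈ Set.Ici a,
      HasDerivAt (fun x => -(σ ^ 2 * Real.exp (-x ^ 2 / (2 * σ ^ 2))))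
        (x * Real.exp (-x ^ 2 / (2 * σ ^ 2))) x := by
    intro x _
    have h1 : HasDerivAt (fun x : ℝ => -x ^ 2 / (2 * σ ^ 2)) (-x / σ ^ 2) x := by
      have := ((hasDerivAt_pow 2 x).neg).div_const (2 * σ ^ 2)
      refine this.congr_deriv ?_
      field_simp
      ring
    have h2 := (h1.exp.const_mul (σ ^ 2)).neg
    refine h2.congr_deriv ?_
    field_simp
  have hint : IntegrableOn (fun w => w * Real.exp (-w ^ 2 / (2 * σ ^ 2))) (Set.Ioi a) := by
    have h := integrable_mul_exp_neg_mul_sq hb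
    have heq : (fun x : ℝ => x * Real.exp (-(2 * σ ^ 2)⁻¹ * x ^ 2))
        = fun x : ℝ => x * Real.exp (-x ^ 2 / (2 * σ ^ 2)) := by
      ext x; ring_nf
    rw [heq] at h
    exact h.integrableOn
  have h1 : Tendsto (fun x : ℝ => -x ^ 2 / (2 * σ ^ 2)) atTop atBot := by
    apply Tendsto.atBot_div_const (by positivity)
    exact tendsto_neg_atBot_iff.mpr (tendsto_pow_atTop (by norm_num))
  have htend : Tendsto (fun x : ℝ => -(σ ^ 2 * Real.exp (-x ^ 2 / (2 * σ ^ 2))))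
      atTop (nhds 0) := by
    have := (Real.tendsto_exp_atBot.comp h1).const_mul (σ ^ 2)
    simpa using this.neg
  have := integral_Ioi_of_hasDerivAt_of_tendsto' hderiv hint htend
  rw [this]
  ring

/-- for the Heaviside objective smoothed by Gaussian noise,
the zeroth-order (score-function) estimator is unbiased:
`(1/σ²) E_w[H(θ + w) w] = F'(θ) = (1/(√(2π)σ)) e^{−θ²/(2σ²)}`. -/
theorem heaviside_zeroth_order_unbiased (σ : ℝ) (hσ : 0 < σ) :
    let μ := ProbabilityTheory.gaussianReal 0 ⟨σ ^ 2, sq_nonneg σ⟩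
    let Hs : ℝ → ℝ := fun t => if 0 ≤ t then 1 else 0
    let F : ℝ → ℝ := fun θ => ∫ w, Hs (θ + w) ∂μ
    ∀ θ : ℝ,
      HasDerivAt F ((Real.sqrt (2 * Real.pi) * σ)⁻¹ * Real.exp (-θ ^ 2 / (2 * σ ^ 2))) θ ∧
      (σ ^ 2)⁻¹ * (∫ w, Hs (θ + w) * w ∂μ) =
        (Real.sqrt (2 * Real.pi) * σ)⁻¹ * Real.exp (-θ ^ 2 / (2 * σ ^ 2)) := by
  intro μ Hs F θ
  set v : ℝ≥0 := ⟨σ ^ 2, sq_nonneg σ⟩ with hv_def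
  have hv : v ≠ 0 := by
    intro h
    have : (v : ℝ) = 0 := by rw [h]; simp
    simp only [hv_def, NNReal.coe_mk] at this
    change σ ^ 2 = 0 at this
    nlinarith
  set g : ℝ → ℝ := fun x => (Real.sqrt (2 * π) * σ)⁻¹ * Real.exp (-x ^ 2 / (2 * σ ^ 2))
    with hg_def
  have hpdf : ProbabilityTheory.gaussianPDFReal 0 v = g := my_pdf_eq σ hσ
  have hb : (0 : ℝ) < (2 * σ ^ 2)⁻¹ := by positivity
  have hgcont : Continuous g := by
    apply Continuous.mul continuous_const
    exact Real.continuous_exp.comp (by continuity)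
  have hgint : Integrable g := by
    have h := (integrable_exp_neg_mul_sq hb).const_mul (Real.sqrt (2 * π) * σ)⁻¹
    have heq : (fun x : ℝ => (Real.sqrt (2 * π) * σ)⁻¹ * Real.exp (-(2 * σ ^ 2)⁻¹ * x ^ 2)) = g := by
      ext x
      rw [hg_def]
      congr 1
      ring_nf
    rwa [heq] at h
  -- F as a Lebesgue tail integral
  have hF : ∀ θ' : ℝ, F θ' = ∫ t in Set.Iic θ', g t := by
    intro θ'
    have h1 : F θ' = ∫ w, Hs (θ' + w) * g w := by
      rw [show F θ' = ∫ w, Hs (θ' + w) ∂μ from rfl,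
        my_integral_gaussianReal v hv (fun w => Hs (θ' + w)), hpdf]
    have h2 : (fun w => Hs (θ' + w) * g w) = Set.indicator (Set.Ici (-θ')) g := by
      ext w
      simp only [Set.indicator_apply, Set.mem_Ici]
      by_cases h : -θ' ≤ w
      · rw [if_pos h]
        simp only [Hs, if_pos (by linarith : (0:ℝ) ≤ θ' + w), one_mul]
      · rw [if_neg h]
        simp only [Hs, if_neg (by simp at h; linarith : ¬(0:ℝ) ≤ θ' + w), zero_mul]
    rw [h1, h2, integral_indicator measurableSet_Ici, integral_Ici_eq_integral_Ioi]
    have h3 : (∫ x in Set.Ioi (-θ'), g (-x)) = ∫ x in Set.Iic θ', g x := by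
      simpa using integral_comp_neg_Ioi (-θ') g
    rw [← h3]
    congr 1
    ext x
    rw [hg_def]
    simp [neg_pow]
  constructor
  · -- derivative part
    have hFeq : F = fun θ' => (∫ t in Set.Iic (0:ℝ), g t) + ∫ t in (0:ℝ)..θ', g t := by
      funext θ'
      rw [hF θ']
      have := intervalIntegral.integral_Iic_sub_Iic (hgint.integrableOn) (hgint.integrableOn)
        (a := (0:ℝ)) (b := θ') (μ := volume)
      linarith [this]
    rw [hFeq]
    have hd : HasDerivAt (fun θ' => ∫ t in (0:ℝ)..θ', g t) (g θ) θ :=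
      intervalIntegral.integral_hasDerivAt_right (hgint.intervalIntegrable)
        (hgcont.stronglyMeasurableAtFilter _ _) hgcont.continuousAt
    exact hd.const_add _
  · -- score estimator part
    have h1 : (∫ w, Hs (θ + w) * w ∂μ) = ∫ w, (Hs (θ + w) * w) * g w := by
      rw [my_integral_gaussianReal v hv, hpdf]
    have h2 : (fun w => (Hs (θ + w) * w) * g w)
        = Set.indicator (Set.Ici (-θ)) (fun w => w * g w) := by
      ext w
      simp only [Set.indicator_apply, Set.mem_Ici]
      by_cases h : -θ ≤ w
      · rw [if_pos h]
        simp only [Hs, if_pos (by linarith : (0:ℝ) ≤ θ + w), one_mul]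
      · rw [if_neg h]
        simp only [Hs, if_neg (by simp at h; linarith : ¬(0:ℝ) ≤ θ + w), zero_mul]
    have h3 : (∫ w in Set.Ioi (-θ), w * g w)
        = (Real.sqrt (2 * π) * σ)⁻¹ * (σ ^ 2 * Real.exp (-θ ^ 2 / (2 * σ ^ 2))) := by
      have heq : (fun w => w * g w)
          = fun w => (Real.sqrt (2 * π) * σ)⁻¹ * (w * Real.exp (-w ^ 2 / (2 * σ ^ 2))) := by
        ext w; rw [hg_def]; ring
      rw [heq, integral_const_mul, my_tail σ hσ (-θ)]
      congr 2
      ring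
    rw [h1, h2, integral_indicator measurableSet_Ici, integral_Ici_eq_integral_Ioi, h3]
    field_simp
end

section
/- Let σ > 0, let w ∼ N(0, σ²) on ℝ, and for ν > 0 define the continuous piecewise-linear relaxation of the Heaviside H̄_ν(t) := 0 for t ≤ −ν/2, t/ν + 1/2 for −ν/2 ≤ t ≤ ν/2, and 1 for t ≥ ν/2, and let F_ν(θ) := E_w[H̄_ν(θ + w)]. Let c_σ := 1/(√(2π)σ). Then at θ = ν/2: (a) the pathwise derivative d/dθ' H̄_ν(θ' + w) at θ' = ν/2 exists and equals 0 with probability at least 1 − ν c_σ (it is nonzero, equal to 1/ν, exactly when w ∈ (−ν, 0)); (b) F_ν'(ν/2) = (1/ν) P[w ∈ (−ν, 0)] ≥ c_σ e^{−ν²/(2σ²)} > 0; and (c) the second moment of the pathwise derivative satisfies E[(d/dθ' H̄_ν(θ' + w)|_{θ'=ν/2})²] = (1/ν²) P[w ∈ (−ν, 0)] ≥ (c_σ/ν) e^{−ν²/(2σ²)}, which diverges as ν → 0. -/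
open MeasureTheory

/-- empirical bias of the pathwise derivative for the piecewise-linear
relaxation `H̄_ν` of the Heaviside (relaxed Coulomb friction), under Gaussian smoothing,
at `θ = ν/2`: (a) the pathwise derivative is `1/ν` exactly when `w ∈ (−ν, 0)` and `0`
off `[−ν, 0]`, hence is `0` with probability at least `1 − ν c_σ`; (b) the true derivative
is `F_ν'(ν/2) = (1/ν) P[w ∈ (−ν, 0)] ≥ c_σ e^{−ν²/(2σ²)} > 0`; (c) the second moment of
the pathwise derivative is `(1/ν²) P[w ∈ (−ν, 0)] ≥ (c_σ/ν) e^{−ν²/(2σ²)}`, a lower bound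
which diverges as `ν → 0`. -/
theorem relaxed_heaviside_empirical_bias (σ ν : ℝ) (hσ : 0 < σ) (hν : 0 < ν) :
    let μ := ProbabilityTheory.gaussianReal 0 ⟨σ ^ 2, sq_nonneg σ⟩
    let Hb : ℝ → ℝ := fun t => if t ≤ -ν / 2 then 0 else if t ≤ ν / 2 then t / ν + 1 / 2 else 1
    let Fν : ℝ → ℝ := fun θ => ∫ w, Hb (θ + w) ∂μ
    let cσ : ℝ := (Real.sqrt (2 * Real.pi) * σ)⁻¹
    -- (a)
    ((∀ w ∈ Set.Ioo (-ν) (0 : ℝ), HasDerivAt (fun θ' => Hb (θ' + w)) ν⁻¹ (ν / 2)) ∧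
     (∀ w ∉ Set.Icc (-ν) (0 : ℝ), HasDerivAt (fun θ' => Hb (θ' + w)) 0 (ν / 2)) ∧
     1 - ν * cσ ≤ (μ {w | HasDerivAt (fun θ' => Hb (θ' + w)) 0 (ν / 2)}).toReal) ∧
    -- (b)
    (HasDerivAt Fν (ν⁻¹ * (μ (Set.Ioo (-ν) 0)).toReal) (ν / 2) ∧
     cσ * Real.exp (-ν ^ 2 / (2 * σ ^ 2)) ≤ ν⁻¹ * (μ (Set.Ioo (-ν) 0)).toReal ∧
     0 < ν⁻¹ * (μ (Set.Ioo (-ν) 0)).toReal) ∧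
    -- (c)
    ((∫ w, (deriv (fun θ' => Hb (θ' + w)) (ν / 2)) ^ 2 ∂μ) =
        (ν⁻¹) ^ 2 * (μ (Set.Ioo (-ν) 0)).toReal ∧
     (cσ / ν) * Real.exp (-ν ^ 2 / (2 * σ ^ 2)) ≤
        ∫ w, (deriv (fun θ' => Hb (θ' + w)) (ν / 2)) ^ 2 ∂μ ∧
     Filter.Tendsto (fun ν' : ℝ => (cσ / ν') * Real.exp (-ν' ^ 2 / (2 * σ ^ 2)))
        (nhdsWithin 0 (Set.Ioi 0)) Filter.atTop) := by
  intro μ Hb Fν cσ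
  have hμ : μ = ProbabilityTheory.gaussianReal 0 ⟨σ ^ 2, sq_nonneg σ⟩ := rfl
  have hHbdef : Hb = fun t => if t ≤ -ν / 2 then 0 else if t ≤ ν / 2 then t / ν + 1 / 2 else 1 :=
    rfl
  have hcσdef : cσ = (Real.sqrt (2 * Real.pi) * σ)⁻¹ := rfl
  set v : NNReal := ⟨σ ^ 2, sq_nonneg σ⟩ with hvdef
  have hv : v ≠ 0 := by
    intro h
    have : σ ^ 2 = 0 := congrArg Subtype.val h
    nlinarith
  have hcσ : 0 < cσ := by
    rw [hcσdef]
    have : 0 < Real.sqrt (2 * Real.pi) := Real.sqrt_pos.mpr (by positivity)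
    positivity
  have hprob : IsProbabilityMeasure μ := by rw [hμ]; infer_instance
  -- pdf formula
  have pdf_eq : ∀ x : ℝ, ProbabilityTheory.gaussianPDFReal 0 v x
      = cσ * Real.exp (-x ^ 2 / (2 * σ ^ 2)) := by
    intro x
    rw [ProbabilityTheory.gaussianPDFReal, hcσdef]
    have hcoe : (v : ℝ) = σ ^ 2 := rfl
    rw [hcoe]
    rw [show 2 * Real.pi * σ ^ 2 = (2 * Real.pi) * σ ^ 2 by ring,
      Real.sqrt_mul (by positivity) (σ ^ 2), Real.sqrt_sq hσ.le]
    ring_nf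
  have hμs : ∀ s : Set ℝ, (μ s).toReal = ∫ x in s, ProbabilityTheory.gaussianPDFReal 0 v x := by
    intro s
    rw [hμ, ProbabilityTheory.gaussianReal_apply_eq_integral 0 hv s,
      ENNReal.toReal_ofReal (integral_nonneg fun x => ProbabilityTheory.gaussianPDFReal_nonneg _ _ _)]
  -- part (a1)
  have a1 : ∀ w ∈ Set.Ioo (-ν) (0 : ℝ), HasDerivAt (fun θ' => Hb (θ' + w)) ν⁻¹ (ν / 2) := by
    intro w hw
    have hlin : HasDerivAt (fun θ' : ℝ => (θ' + w) / ν + 1 / 2) ν⁻¹ (ν / 2) := by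
      simpa [one_div] using (((hasDerivAt_id (ν / 2)).add_const w).div_const ν).add_const
        ((1 : ℝ) / 2)
    refine hlin.congr_of_eventuallyEq ?_
    have hmem : Set.Ioo (-ν / 2 - w) (ν / 2 - w) ∈ nhds (ν / 2) := by
      apply Ioo_mem_nhds
      · have := hw.1; linarith
      · have := hw.2; linarith
    filter_upwards [hmem] with θ hθ
    have h1 : ¬(θ + w ≤ -ν / 2) := by have := hθ.1; simp only [Set.mem_Ioo] at hθ; linarith [hθ.1]
    have h2 : θ + w ≤ ν / 2 := by simp only [Set.mem_Ioo] at hθ; linarith [hθ.2]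
    show Hb (θ + w) = (θ + w) / ν + 1 / 2
    rw [hHbdef]
    simp only [if_neg h1, if_pos h2]
  -- part (a2)
  have a2 : ∀ w ∉ Set.Icc (-ν) (0 : ℝ), HasDerivAt (fun θ' => Hb (θ' + w)) 0 (ν / 2) := by
    intro w hw
    rw [Set.mem_Icc, not_and_or, not_le, not_le] at hw
    rcases hw with hw | hw
    · refine (hasDerivAt_const (ν / 2) (0 : ℝ)).congr_of_eventuallyEq ?_
      have hmem : Set.Iio (-ν / 2 - w) ∈ nhds (ν / 2) := Iio_mem_nhds (by linarith)
      filter_upwards [hmem] with θ hθ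
      have h1 : θ + w ≤ -ν / 2 := by have := Set.mem_Iio.mp hθ; linarith
      show Hb (θ + w) = 0
      rw [hHbdef]; simp only [if_pos h1]
    · refine (hasDerivAt_const (ν / 2) (1 : ℝ)).congr_of_eventuallyEq ?_
      have hmem : Set.Ioi (ν / 2 - w) ∈ nhds (ν / 2) := Ioi_mem_nhds (by linarith)
      filter_upwards [hmem] with θ hθ
      have h2 : ¬(θ + w ≤ ν / 2) := by have := Set.mem_Ioi.mp hθ; push_neg; linarith
      have h1 : ¬(θ + w ≤ -ν / 2) := by have := Set.mem_Ioi.mp hθ; push_neg; linarith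
      show Hb (θ + w) = 1
      rw [hHbdef]; simp only [if_neg h1, if_neg h2]
  -- clamp form of Hb
  have hHb : ∀ t : ℝ, Hb t = max 0 (min 1 (t / ν + 1 / 2)) := by
    intro t
    simp only [hHbdef]
    split_ifs with h1 h2
    · have hd : t / ν ≤ -(1 / 2) := by rw [div_le_iff₀ hν]; linarith
      rw [min_eq_right (by linarith), max_eq_left (by linarith)]
    · have hd1 : -(1 / 2) ≤ t / ν := by rw [le_div_iff₀ hν]; push_neg at h1; linarith
      have hd2 : t / ν ≤ 1 / 2 := by rw [div_le_iff₀ hν]; linarith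
      rw [min_eq_right (by linarith), max_eq_right (by linarith)]
    · push_neg at h1 h2
      have hd : 1 / 2 ≤ t / ν := by rw [le_div_iff₀ hν]; linarith
      rw [min_eq_left (by linarith), max_eq_right (by linarith)]
  have hcont : Continuous Hb := by
    have : Hb = fun t => max 0 (min 1 (t / ν + 1 / 2)) := funext hHb
    rw [this]
    exact continuous_const.max (continuous_const.min ((continuous_id.div_const ν).add
      continuous_const))
  have hb0 : ∀ t, 0 ≤ Hb t := fun t => by rw [hHb]; exact le_max_left _ _
  have hb1 : ∀ t, Hb t ≤ 1 := fun t => by rw [hHb]; exact max_le zero_le_one (min_le_left _ _)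
  -- Lipschitz
  have hlipR : ∀ a b : ℝ, |Hb a - Hb b| ≤ ν⁻¹ * |a - b| := by
    intro a b
    rw [hHb a, hHb b]
    have h1 : |max 0 (min 1 (a / ν + 1 / 2)) - max 0 (min 1 (b / ν + 1 / 2))|
        ≤ |min 1 (a / ν + 1 / 2) - min 1 (b / ν + 1 / 2)| := by
      have := abs_max_sub_max_le_max (0 : ℝ) (min 1 (a / ν + 1 / 2)) 0
        (min 1 (b / ν + 1 / 2))
      simpa using this
    have h2 : |min 1 (a / ν + 1 / 2) - min 1 (b / ν + 1 / 2)|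
        ≤ |(a / ν + 1 / 2) - (b / ν + 1 / 2)| := by
      have := abs_min_sub_min_le_max (1 : ℝ) (a / ν + 1 / 2) 1 (b / ν + 1 / 2)
      simpa using this
    have h3 : |(a / ν + 1 / 2) - (b / ν + 1 / 2)| = ν⁻¹ * |a - b| := by
      rw [show (a / ν + 1 / 2) - (b / ν + 1 / 2) = (a - b) / ν by ring, abs_div,
        abs_of_pos hν, div_eq_inv_mul]
    calc |max 0 (min 1 (a / ν + 1 / 2)) - max 0 (min 1 (b / ν + 1 / 2))|
        ≤ |min 1 (a / ν + 1 / 2) - min 1 (b / ν + 1 / 2)| := h1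
      _ ≤ |(a / ν + 1 / 2) - (b / ν + 1 / 2)| := h2
      _ = ν⁻¹ * |a - b| := h3
  have hcomp : ∀ w : ℝ, LipschitzWith (Real.nnabs ν⁻¹) (fun θ => Hb (θ + w)) := by
    intro w
    apply LipschitzWith.of_dist_le_mul
    intro a b
    rw [Real.dist_eq, Real.dist_eq, Real.coe_nnabs, abs_of_pos (inv_pos.mpr hν)]
    calc |Hb (a + w) - Hb (b + w)| ≤ ν⁻¹ * |(a + w) - (b + w)| := hlipR _ _
      _ = ν⁻¹ * |a - b| := by rw [show (a + w) - (b + w) = a - b by ring]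
  -- null set
  have hnull : ∀ᵐ w ∂μ, w ≠ -ν ∧ w ≠ 0 := by
    have h0 : μ ({-ν, 0} : Set ℝ) = 0 := by
      rw [hμ]
      exact ProbabilityTheory.gaussianReal_absolutelyContinuous 0 hv
        (Set.Finite.measure_zero (Set.toFinite _) volume)
    filter_upwards [measure_eq_zero_iff_ae_notMem.mp h0] with w hw
    simp only [Set.mem_insert_iff, Set.mem_singleton_iff, not_or] at hw
    exact hw
  -- F'
  set F' : ℝ → ℝ := Set.indicator (Set.Ioo (-ν) 0) (fun _ => ν⁻¹) with hF'def
  have h_diff : ∀ᵐ w ∂μ, HasDerivAt (fun θ => Hb (θ + w)) (F' w) (ν / 2) := by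
    filter_upwards [hnull] with w hw
    by_cases hwI : w ∈ Set.Icc (-ν) (0 : ℝ)
    · have hwo : w ∈ Set.Ioo (-ν) (0 : ℝ) :=
        ⟨hwI.1.lt_of_ne (Ne.symm hw.1), hwI.2.lt_of_ne hw.2⟩
      rw [hF'def, Set.indicator_of_mem hwo]
      exact a1 w hwo
    · have hwo : w ∉ Set.Ioo (-ν) (0 : ℝ) := fun h => hwI (Set.Ioo_subset_Icc_self h)
      rw [hF'def, Set.indicator_of_notMem hwo]
      exact a2 w hwI
  have hF_meas : ∀ᶠ θ in nhds (ν / 2), AEStronglyMeasurable (fun w => Hb (θ + w)) μ :=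
    Filter.Eventually.of_forall fun θ =>
      (hcont.comp (continuous_const.add continuous_id)).aestronglyMeasurable
  have hF_int : Integrable (fun w => Hb (ν / 2 + w)) μ := by
    apply Integrable.mono' (integrable_const (1 : ℝ))
    · exact (hcont.comp (continuous_const.add continuous_id)).aestronglyMeasurable
    · refine Filter.Eventually.of_forall fun w => ?_
      rw [Real.norm_eq_abs, abs_le]
      exact ⟨by linarith [hb0 (ν / 2 + w)], hb1 _⟩
  have hF'_meas : AEStronglyMeasurable F' μ :=
    (measurable_const.indicator measurableSet_Ioo).aestronglyMeasurable
  have h_lip : ∀ᵐ w ∂μ, LipschitzOnWith (Real.nnabs ν⁻¹) (fun θ => Hb (θ + w))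
      (Metric.ball (ν / 2) 1) :=
    Filter.Eventually.of_forall fun w => (hcomp w).lipschitzOnWith
  obtain ⟨hF'_int, hderiv⟩ :=
    hasDerivAt_integral_of_dominated_loc_of_lip (F := fun θ w => Hb (θ + w)) (F' := F')
      (x₀ := ν / 2) (bound := fun _ => ν⁻¹) (Metric.ball_mem_nhds _ one_pos) hF_meas hF_int hF'_meas h_lip
      (integrable_const _) h_diff
  have hintF' : ∫ w, F' w ∂μ = ν⁻¹ * (μ (Set.Ioo (-ν) 0)).toReal := by
    rw [hF'def, integral_indicator measurableSet_Ioo, setIntegral_const, smul_eq_mul, measureReal_def]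
    ring
  -- measure bounds
  have hIcc : (μ (Set.Icc (-ν) 0)).toReal ≤ ν * cσ := by
    rw [hμs]
    have h1 : ∫ x in Set.Icc (-ν) 0, ProbabilityTheory.gaussianPDFReal 0 v x
        ≤ ∫ x in Set.Icc (-ν) 0, cσ := by
      apply setIntegral_mono_on
      · exact (ProbabilityTheory.integrable_gaussianPDFReal 0 v).integrableOn
      · exact (integrableOn_const_iff (by finiteness)).mpr (Or.inr (by rw [Real.volume_Icc]; exact ENNReal.ofReal_lt_top))
      · exact measurableSet_Icc
      · intro x _
        rw [pdf_eq]
        calc cσ * Real.exp (-x ^ 2 / (2 * σ ^ 2)) ≤ cσ * 1 := by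
              apply mul_le_mul_of_nonneg_left _ hcσ.le
              rw [Real.exp_le_one_iff]
              have h2 : (0:ℝ) ≤ x ^ 2 / (2 * σ ^ 2) := by positivity
              have h3 := neg_div (2 * σ ^ 2) (x ^ 2)
              linarith
          _ = cσ := mul_one cσ
    rw [setIntegral_const, measureReal_def, Real.volume_Icc] at h1
    have : (ENNReal.ofReal (0 - -ν)).toReal = ν := by
      rw [ENNReal.toReal_ofReal (by linarith)]; ring
    rw [this, smul_eq_mul] at h1
    exact h1
  have hIoo : ν * (cσ * Real.exp (-ν ^ 2 / (2 * σ ^ 2))) ≤ (μ (Set.Ioo (-ν) 0)).toReal := by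
    rw [hμs]
    have h1 : ∫ x in Set.Ioo (-ν) 0, (cσ * Real.exp (-ν ^ 2 / (2 * σ ^ 2)))
        ≤ ∫ x in Set.Ioo (-ν) 0, ProbabilityTheory.gaussianPDFReal 0 v x := by
      apply setIntegral_mono_on
      · exact (integrableOn_const_iff (by finiteness)).mpr (Or.inr (by rw [Real.volume_Ioo]; exact ENNReal.ofReal_lt_top))
      · exact (ProbabilityTheory.integrable_gaussianPDFReal 0 v).integrableOn
      · exact measurableSet_Ioo
      · intro x hx
        rw [pdf_eq]
        apply mul_le_mul_of_nonneg_left _ hcσ.le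
        apply Real.exp_le_exp.mpr
        have hx2 : x ^ 2 ≤ ν ^ 2 := by
          nlinarith [hx.1, hx.2, mul_pos (show (0:ℝ) < ν - x by linarith [hx.2])
            (show (0:ℝ) < ν + x by linarith [hx.1])]
        have hpos : (0:ℝ) < 2 * σ ^ 2 := by positivity
        apply (div_le_div_iff_of_pos_right hpos).mpr
        linarith
    rw [setIntegral_const, measureReal_def, Real.volume_Ioo] at h1
    have : (ENNReal.ofReal (0 - -ν)).toReal = ν := by
      rw [ENNReal.toReal_ofReal (by linarith)]; ring
    rw [this, smul_eq_mul] at h1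
    exact h1
  have hb2 : cσ * Real.exp (-ν ^ 2 / (2 * σ ^ 2)) ≤ ν⁻¹ * (μ (Set.Ioo (-ν) 0)).toReal := by
    have := mul_le_mul_of_nonneg_left hIoo (inv_nonneg.mpr hν.le)
    rwa [inv_mul_cancel_left₀ hν.ne'] at this
  have hb3 : 0 < ν⁻¹ * (μ (Set.Ioo (-ν) 0)).toReal :=
    lt_of_lt_of_le (by positivity) hb2
  have hkey : (∫ w, (deriv (fun θ' => Hb (θ' + w)) (ν / 2)) ^ 2 ∂μ)
      = (ν⁻¹) ^ 2 * (μ (Set.Ioo (-ν) 0)).toReal := by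
    have hae : (fun w => (deriv (fun θ' => Hb (θ' + w)) (ν / 2)) ^ 2)
        =ᵐ[μ] Set.indicator (Set.Ioo (-ν) 0) (fun _ => (ν⁻¹) ^ 2) := by
      filter_upwards [hnull] with w hw
      by_cases hwI : w ∈ Set.Icc (-ν) (0 : ℝ)
      · have hwo : w ∈ Set.Ioo (-ν) (0 : ℝ) :=
          ⟨hwI.1.lt_of_ne (Ne.symm hw.1), hwI.2.lt_of_ne hw.2⟩
        rw [(a1 w hwo).deriv, Set.indicator_of_mem hwo]
      · have hwo : w ∉ Set.Ioo (-ν) (0 : ℝ) := fun h => hwI (Set.Ioo_subset_Icc_self h)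
        rw [(a2 w hwI).deriv, Set.indicator_of_notMem hwo]
        norm_num
    rw [integral_congr_ae hae, integral_indicator measurableSet_Ioo, setIntegral_const,
      smul_eq_mul, measureReal_def]
    ring
  refine ⟨⟨a1, a2, ?_⟩, ⟨?_, hb2, hb3⟩, ?_, ?_, ?_⟩
  · -- (a3)
    have hsub : (Set.Icc (-ν) (0:ℝ))ᶜ ⊆ {w | HasDerivAt (fun θ' => Hb (θ' + w)) 0 (ν / 2)} :=
      fun w hw => a2 w hw
    have hmono : (μ ((Set.Icc (-ν) (0:ℝ))ᶜ)).toReal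
        ≤ (μ {w | HasDerivAt (fun θ' => Hb (θ' + w)) 0 (ν / 2)}).toReal :=
      ENNReal.toReal_mono (measure_ne_top _ _) (measure_mono hsub)
    have hcompl : (μ ((Set.Icc (-ν) (0:ℝ))ᶜ)).toReal = 1 - (μ (Set.Icc (-ν) 0)).toReal := by
      rw [measure_compl measurableSet_Icc (measure_ne_top _ _), measure_univ,
        ENNReal.toReal_sub_of_le prob_le_one ENNReal.one_ne_top, ENNReal.toReal_one]
    rw [hcompl] at hmono
    linarith
  · -- (b1)
    rw [← hintF']
    exact hderiv
  · -- (c1)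
    exact hkey
  · -- (c2)
    rw [hkey]
    have := mul_le_mul_of_nonneg_left hb2 (inv_nonneg.mpr hν.le)
    calc cσ / ν * Real.exp (-ν ^ 2 / (2 * σ ^ 2))
        = ν⁻¹ * (cσ * Real.exp (-ν ^ 2 / (2 * σ ^ 2))) := by ring
      _ ≤ ν⁻¹ * (ν⁻¹ * (μ (Set.Ioo (-ν) 0)).toReal) := this
      _ = (ν⁻¹) ^ 2 * (μ (Set.Ioo (-ν) 0)).toReal := by ring
  · -- (c3)
    have h1 : Filter.Tendsto (fun ν' : ℝ => cσ / ν') (nhdsWithin 0 (Set.Ioi 0)) Filter.atTop := by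
      simp only [div_eq_mul_inv]
      exact tendsto_inv_nhdsGT_zero.const_mul_atTop hcσ
    have h2 : Filter.Tendsto (fun ν' : ℝ => Real.exp (-ν' ^ 2 / (2 * σ ^ 2)))
        (nhdsWithin 0 (Set.Ioi 0)) (nhds 1) := by
      have hc : Continuous fun ν' : ℝ => Real.exp (-ν' ^ 2 / (2 * σ ^ 2)) :=
        Real.continuous_exp.comp (((continuous_pow 2).neg).div_const _)
      simpa using (hc.tendsto 0).mono_left (nhdsWithin_le_nhds (s := Set.Ioi (0:ℝ)))
    exact Filter.Tendsto.atTop_mul_pos one_pos h1 h2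
end

section
/- Let p be an admissible noise distribution on ℝ^m with density p(w) = e^{α − ψ(w)}, where ψ is twice differentiable everywhere with Hessian of polynomial growth and ψ(w) ≥ a‖w‖ − b with a > 0. Then the gradient ∇ψ: ℝ^m → ℝ^m has polynomial growth, and E_{w∼p}[∇ψ(w)] = 0. -/
open MeasureTheory

lemma aux_integrable {m : ℕ} {a : ℝ} (ha : 0 < a) (n : ℕ) :
    Integrable (fun w : EuclideanSpace ℝ (Fin m) => (1 + ‖w‖) ^ n * Real.exp (-(a * ‖w‖))) := by
  set k : ℕ := n + (m + 1) with hk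
  have hk0 : (0:ℝ) < k := by positivity
  set c : ℝ := min 1 (a / k) with hc
  have hc0 : 0 < c := lt_min one_pos (div_pos ha hk0)
  have key : ∀ w : EuclideanSpace ℝ (Fin m),
      (1 + ‖w‖) ^ n * Real.exp (-(a * ‖w‖)) ≤ (1 / c ^ k) * (1 + ‖w‖) ^ (-(m + 1 : ℝ)) := by
    intro w
    set t : ℝ := ‖w‖ with ht
    have ht0 : 0 ≤ t := norm_nonneg _
    have h1t : (0:ℝ) < 1 + t := by linarith
    have h1 : c * (1 + t) ≤ 1 + a * t / k := by
      have hc1 : c ≤ 1 := min_le_left _ _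
      have hc2 : c ≤ a / k := min_le_right _ _
      have h5 : c * t ≤ (a / k) * t := mul_le_mul_of_nonneg_right hc2 ht0
      have e : (a / k) * t = a * t / k := by ring
      nlinarith
    have h2 : (c * (1 + t)) ^ k ≤ Real.exp (a * t) := by
      calc (c * (1 + t)) ^ k ≤ (1 + a * t / k) ^ k := by
            apply pow_le_pow_left₀ (by positivity) h1
        _ ≤ (Real.exp (a * t / k)) ^ k := by
            apply pow_le_pow_left₀ (by positivity)
            linarith [Real.add_one_le_exp (a * t / k)]
        _ = Real.exp (a * t) := by
            rw [← Real.exp_nat_mul]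
            congr 1
            field_simp
    have hpos : 0 < (c * (1 + t)) ^ k := by positivity
    have h3 : Real.exp (-(a * t)) ≤ 1 / (c * (1 + t)) ^ k := by
      rw [Real.exp_neg, inv_eq_one_div]
      exact one_div_le_one_div_of_le hpos h2
    have h4 : (1 + t) ^ n * Real.exp (-(a * t)) ≤ (1 + t) ^ n / (c * (1 + t)) ^ k := by
      rw [div_eq_mul_one_div]
      exact mul_le_mul_of_nonneg_left h3 (by positivity)
    refine h4.trans (le_of_eq ?_)
    have hr : (1 + t) ^ (-(m + 1 : ℝ)) = ((1 + t) ^ (m + 1 : ℕ))⁻¹ := by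
      rw [Real.rpow_neg h1t.le, ← Real.rpow_natCast (1 + t) (m + 1)]
      norm_num
    rw [hr, mul_pow, hk, pow_add]
    field_simp
    ring
  have hint : Integrable (fun w : EuclideanSpace ℝ (Fin m) =>
      (1 / c ^ k) * (1 + ‖w‖) ^ (-(m + 1 : ℝ))) := by
    apply Integrable.const_mul
    apply integrable_one_add_norm (E := EuclideanSpace ℝ (Fin m))
    simp [finrank_euclideanSpace_fin]
  refine hint.mono' ?_ (Filter.Eventually.of_forall fun w => ?_)
  · exact (((continuous_const.add continuous_norm).pow n).mul
      ((continuous_const.mul continuous_norm).neg.rexp)).aestronglyMeasurable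
  · rw [Real.norm_of_nonneg (by positivity)]
    exact key w

lemma polyGrowth_nat_bound {E F : Type*} [NormedAddCommGroup E] [NormedAddCommGroup F]
    {f : E → F} (h : ∃ a b : ℝ, 0 < a ∧ 0 < b ∧ ∀ z, ‖f z‖ ≤ a * (1 + ‖z‖ ^ b)) :
    ∃ (A : ℝ) (n : ℕ), 0 < A ∧ ∀ z, ‖f z‖ ≤ A * (1 + ‖z‖) ^ n := by
  obtain ⟨a, b, ha, hb, hf⟩ := h
  refine ⟨2 * a, ⌈b⌉₊, by positivity, fun z => ?_⟩
  set r : ℝ := ‖z‖ with hr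
  have hr0 : 0 ≤ r := norm_nonneg _
  have h1r : (1:ℝ) ≤ 1 + r := by linarith
  have hone : (1:ℝ) ≤ (1 + r) ^ ⌈b⌉₊ := one_le_pow₀ h1r
  have key : 1 + r ^ b ≤ 2 * (1 + r) ^ ⌈b⌉₊ := by
    rcases le_or_gt r 1 with hle | hgt
    · have : r ^ b ≤ 1 := Real.rpow_le_one hr0 hle hb.le
      linarith
    · have h1 : r ^ b ≤ r ^ (⌈b⌉₊ : ℝ) :=
        Real.rpow_le_rpow_of_exponent_le hgt.le (Nat.le_ceil b)
      have h2 : r ^ (⌈b⌉₊ : ℝ) = r ^ (⌈b⌉₊ : ℕ) := Real.rpow_natCast r _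
      have h3 : r ^ (⌈b⌉₊ : ℕ) ≤ (1 + r) ^ ⌈b⌉₊ :=
        pow_le_pow_left₀ hr0 (by linarith) _
      nlinarith
  calc ‖f z‖ ≤ a * (1 + r ^ b) := hf z
    _ ≤ a * (2 * (1 + r) ^ ⌈b⌉₊) := mul_le_mul_of_nonneg_left key ha.le
    _ = 2 * a * (1 + r) ^ ⌈b⌉₊ := by ring

lemma fderiv_poly {m : ℕ} (ψ : EuclideanSpace ℝ (Fin m) → ℝ)
    (hψ2 : Differentiable ℝ (fun w => fderiv ℝ ψ w))
    (hψ3 : ∃ a b : ℝ, 0 < a ∧ 0 < b ∧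
      ∀ z, ‖fderiv ℝ (fun w' => fderiv ℝ ψ w') z‖ ≤ a * (1 + ‖z‖ ^ b)) :
    ∃ A B : ℝ, 0 < A ∧ 0 < B ∧ ∀ w, ‖fderiv ℝ ψ w‖ ≤ A * (1 + ‖w‖ ^ B) := by
  obtain ⟨aH, bH, haH, hbH, hH⟩ := hψ3
  set C0 : ℝ := ‖fderiv ℝ ψ 0‖ with hC0
  have hC00 : 0 ≤ C0 := norm_nonneg _
  have key : ∀ w : EuclideanSpace ℝ (Fin m),
      ‖fderiv ℝ ψ w‖ ≤ C0 + aH * (1 + ‖w‖ ^ bH) * ‖w‖ := by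
    intro w
    have hmv : ‖fderiv ℝ ψ w - fderiv ℝ ψ 0‖ ≤ (aH * (1 + ‖w‖ ^ bH)) * ‖w - 0‖ := by
      apply (convex_closedBall (0 : EuclideanSpace ℝ (Fin m)) ‖w‖).norm_image_sub_le_of_norm_fderiv_le
        (fun z _ => hψ2 z) (fun z hz => ?_) (Metric.mem_closedBall_self (norm_nonneg w))
        (by simp [Metric.mem_closedBall])
      · refine (hH z).trans ?_
        have hz' : ‖z‖ ≤ ‖w‖ := by simpa [Metric.mem_closedBall] using hz
        have : ‖z‖ ^ bH ≤ ‖w‖ ^ bH := Real.rpow_le_rpow (norm_nonneg z) hz' hbH.le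
        nlinarith
    have := norm_sub_norm_le (fderiv ℝ ψ w) (fderiv ℝ ψ 0)
    have h2 : ‖w - 0‖ = ‖w‖ := by simp
    rw [h2] at hmv
    linarith
  refine ⟨C0 + 2 * aH, bH + 1, by positivity, by positivity, fun w => ?_⟩
  set r : ℝ := ‖w‖ with hr
  have hr0 : 0 ≤ r := norm_nonneg _
  have hrB0 : 0 ≤ r ^ (bH + 1) := Real.rpow_nonneg hr0 _
  refine (key w).trans ?_
  rcases le_or_gt r 1 with hle | hgt
  · have h1 : r ^ bH ≤ 1 := Real.rpow_le_one hr0 hle hbH.le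
    have hs0 : 0 ≤ r ^ bH := Real.rpow_nonneg hr0 bH
    have h2' : (1 + r ^ bH) * r ≤ 2 := by nlinarith
    have h2 : aH * (1 + r ^ bH) * r ≤ 2 * aH := by
      have := mul_le_mul_of_nonneg_left h2' haH.le
      nlinarith
    nlinarith
  · have hrne : r ≠ 0 := by linarith
    have h1 : r ^ bH * r = r ^ (bH + 1) := (Real.rpow_add_one hrne bH).symm
    have h2 : r ≤ r ^ (bH + 1) := by
      calc r = r ^ (1:ℝ) := (Real.rpow_one r).symm
        _ ≤ r ^ (bH + 1) := Real.rpow_le_rpow_of_exponent_le hgt.le (by linarith)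
    nlinarith

/-- for an admissible noise distribution `p` with density `e^{α − ψ(w)}`
(`ψ(w) ≥ a‖w‖ − b` with `a > 0`, `ψ` twice differentiable with Hessian of polynomial
growth), the score `∇ψ` has polynomial growth and has zero mean under `p`. -/
theorem admissible_score_poly_growth_and_mean_zero {m : ℕ}
    (p : Measure (EuclideanSpace ℝ (Fin m))) [IsProbabilityMeasure p]
    (ψ : EuclideanSpace ℝ (Fin m) → ℝ) (α a b : ℝ) (ha : 0 < a)
    (hp : p = volume.withDensity fun w => ENNReal.ofReal (Real.exp (α - ψ w)))
    (hψlb : ∀ w, a * ‖w‖ - b ≤ ψ w)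
    (hψ1 : Differentiable ℝ ψ)
    (hψ2 : Differentiable ℝ (fun w => fderiv ℝ ψ w))
    (hψ3 : PolyGrowth (fun w => fderiv ℝ (fun w' => fderiv ℝ ψ w') w)) :
    PolyGrowth (fun w => gradient ψ w) ∧ (∫ w, gradient ψ w ∂p) = 0 := by
  obtain ⟨A0, B0, hA0, hB0, hfd⟩ := fderiv_poly ψ hψ2 hψ3
  have hgdef : ∀ w, gradient ψ w
      = (InnerProductSpace.toDual ℝ (EuclideanSpace ℝ (Fin m))).symm (fderiv ℝ ψ w) :=
    fun _ => rfl
  have hgradnorm : ∀ w, ‖gradient ψ w‖ = ‖fderiv ℝ ψ w‖ := by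
    intro w
    rw [hgdef w]
    exact LinearIsometryEquiv.norm_map _ _
  have hPG : PolyGrowth (fun w => gradient ψ w) :=
    ⟨A0, B0, hA0, hB0, fun z => by rw [hgradnorm]; exact hfd z⟩
  refine ⟨hPG, ?_⟩
  obtain ⟨A, n, hA, hbound⟩ := polyGrowth_nat_bound ⟨A0, B0, hA0, hB0, hfd⟩
  set φ : EuclideanSpace ℝ (Fin m) → ℝ := fun w => Real.exp (α - ψ w) with hφdef
  have hφpos : ∀ w, 0 < φ w := fun w => Real.exp_pos _
  have hφcont : Continuous φ := (continuous_const.sub hψ1.continuous).rexp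
  have hφdiff : Differentiable ℝ φ := ((differentiable_const α).sub hψ1).exp
  have hφderiv : ∀ w, HasFDerivAt φ (φ w • (-(fderiv ℝ ψ w))) w := by
    intro w
    have h1 : HasFDerivAt (fun w' => α - ψ w') (-(fderiv ℝ ψ w)) w :=
      ((hψ1 w).hasFDerivAt).const_sub α
    exact h1.exp
  have hφbound : ∀ w, φ w ≤ Real.exp (α + b) * Real.exp (-(a * ‖w‖)) := by
    intro w
    rw [← Real.exp_add]
    apply Real.exp_le_exp.2
    have := hψlb w; linarith
  have hdom : Integrable (fun w : EuclideanSpace ℝ (Fin m) =>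
      (A * Real.exp (α + b)) * ((1 + ‖w‖) ^ n * Real.exp (-(a * ‖w‖)))) :=
    (aux_integrable ha n).const_mul _
  have hprod : ∀ w, φ w * ‖fderiv ℝ ψ w‖ ≤
      (A * Real.exp (α + b)) * ((1 + ‖w‖) ^ n * Real.exp (-(a * ‖w‖))) := by
    intro w
    calc φ w * ‖fderiv ℝ ψ w‖
        ≤ (Real.exp (α + b) * Real.exp (-(a * ‖w‖))) * (A * (1 + ‖w‖) ^ n) :=
          mul_le_mul (hφbound w) (hbound w) (norm_nonneg _) (by positivity)
      _ = _ := by ring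
  have hgcont : Continuous (fun w => gradient ψ w) := by
    have h : Continuous (fun w =>
        (InnerProductSpace.toDual ℝ (EuclideanSpace ℝ (Fin m))).symm (fderiv ℝ ψ w)) :=
      (InnerProductSpace.toDual ℝ _).symm.continuous.comp hψ2.continuous
    simpa [← hgdef] using h
  have hsgint : Integrable (fun w => φ w • gradient ψ w) volume := by
    refine hdom.mono' ((hφcont.smul hgcont).aestronglyMeasurable)
      (Filter.Eventually.of_forall fun w => ?_)
    rw [norm_smul, Real.norm_of_nonneg (hφpos w).le, hgradnorm]
    exact hprod w
  have hφint : Integrable φ volume := by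
    have h0 : Integrable (fun w : EuclideanSpace ℝ (Fin m) =>
        Real.exp (α + b) * ((1 + ‖w‖) ^ 0 * Real.exp (-(a * ‖w‖)))) :=
      (aux_integrable ha 0).const_mul _
    refine h0.mono' hφcont.aestronglyMeasurable (Filter.Eventually.of_forall fun w => ?_)
    rw [Real.norm_of_nonneg (hφpos w).le, pow_zero, one_mul]
    exact hφbound w
  have hdirzero : ∀ v : EuclideanSpace ℝ (Fin m),
      (∫ w, φ w * fderiv ℝ ψ w v ∂(volume : Measure (EuclideanSpace ℝ (Fin m)))) = 0 := by
    intro v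
    have hcont2 : Continuous (fun w => fderiv ℝ ψ w v) :=
      ((ContinuousLinearMap.apply ℝ ℝ v).continuous).comp hψ2.continuous
    have hmulint : Integrable (fun w => φ w * fderiv ℝ ψ w v) volume := by
      refine (hdom.const_mul ‖v‖).mono' ((hφcont.mul hcont2).aestronglyMeasurable)
        (Filter.Eventually.of_forall fun w => ?_)
      have h1 : ‖φ w * fderiv ℝ ψ w v‖ ≤ φ w * (‖fderiv ℝ ψ w‖ * ‖v‖) := by
        rw [norm_mul, Real.norm_of_nonneg (hφpos w).le]
        exact mul_le_mul_of_nonneg_left ((fderiv ℝ ψ w).le_opNorm v) (hφpos w).le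
      refine h1.trans ?_
      have := mul_le_mul_of_nonneg_right (hprod w) (norm_nonneg v)
      nlinarith [norm_nonneg v]
    have hfdφ : ∀ w, fderiv ℝ φ w = φ w • (-(fderiv ℝ ψ w)) := fun w => (hφderiv w).fderiv
    have heq : (fun w : EuclideanSpace ℝ (Fin m) => fderiv ℝ φ w v * (1:ℝ))
        = fun w => -(φ w * fderiv ℝ ψ w v) := by
      funext w
      rw [hfdφ w]
      simp [mul_comm]
    have hibp := integral_mul_fderiv_eq_neg_fderiv_mul_of_integrable
      (μ := (volume : Measure (EuclideanSpace ℝ (Fin m)))) (f := φ)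
      (g := fun _ : EuclideanSpace ℝ (Fin m) => (1:ℝ)) (v := v)
      (by rw [heq]; exact hmulint.neg)
      (by simpa using (integrable_zero _ ℝ (volume : Measure (EuclideanSpace ℝ (Fin m)))))
      (by simpa using hφint)
      (fun x _ => hφdiff x) (fun x _ => (differentiable_const (1:ℝ)) x)
    have h0 : (∫ x, φ x * fderiv ℝ (fun _ : EuclideanSpace ℝ (Fin m) => (1:ℝ)) x v
        ∂(volume : Measure (EuclideanSpace ℝ (Fin m)))) = 0 := by
      simp
    have h2 : (∫ x, fderiv ℝ φ x v * 1
        ∂(volume : Measure (EuclideanSpace ℝ (Fin m)))) = 0 :=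
      neg_eq_zero.mp (h0 ▸ hibp).symm
    rw [heq, integral_neg, neg_eq_zero] at h2
    exact h2
  have hmean : (∫ w, gradient ψ w ∂p)
      = ∫ w, φ w • gradient ψ w ∂(volume : Measure (EuclideanSpace ℝ (Fin m))) := by
    rw [hp]
    have hcoe : (fun w => ENNReal.ofReal (φ w))
        = (fun w => (((fun w => (φ w).toNNReal) w : NNReal) : ENNReal)) := rfl
    rw [hcoe, integral_withDensity_eq_integral_smul hφcont.measurable.real_toNNReal]
    congr 1
    funext w
    rw [NNReal.smul_def, Real.coe_toNNReal _ (hφpos w).le]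
  rw [hmean]
  refine ext_inner_left ℝ fun v => ?_
  rw [inner_zero_right, ← integral_inner hsgint v]
  have hinteg : (fun w => (inner ℝ v (φ w • gradient ψ w) : ℝ))
      = fun w => φ w * fderiv ℝ ψ w v := by
    funext w
    rw [real_inner_smul_right, real_inner_comm, hgdef w,
      InnerProductSpace.toDual_symm_apply]
  rw [hinteg]
  exact hdirzero v
end
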